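/- arXiv:1602.05448 — 10 statements merged into one kernel-verified Lean document; each statement's English description precedes it below -/
import Mathlib

section
/- Let ρ(r,𝐬|a) be a strictly positive conditional probability distribution over r∈𝓡 and sequences 𝐬=(s_1,…,s_B)∈𝓢^B given a∈{1,…,A}, and let ρ(a) be a strictly positive probability distribution on {1,…,A}. Then the minimum of K = Σ_{r,𝐬,a} ρ(r,𝐬|a)ρ(a) log(ρ(r,𝐬|a)/R(r,𝐬|a)), taken over all strictly positive functions R(r,𝐬|a) satisfying Σ_r R(r,𝐬|a) = Σ_r R(r,𝐬|ā) for all a,ā,𝐬 and Σ_{r,𝐬} R(r,𝐬|a) = 1 for all a, equals the mutual information I(A;𝐒) of the channel ρ(𝐬|a) = Σ_r ρ(r,𝐬|a) with input distribution ρ(a); moreover the minimum is attained at R(r,𝐬|a) = ρ(r,𝐬|a)ρ(𝐬)/ρ(𝐬|a), where ρ(𝐬) = Σ_a ρ(𝐬|a)ρ(a). -/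
open scoped BigOperators

/-- A probability distribution on a finite type. -/
def IsDist {α : Type*} [Fintype α] (q : α → ℝ) : Prop :=
  (∀ x, 0 ≤ q x) ∧ ∑ x, q x = 1

/-- Mutual information of the channel `W` (probability of output `y` given input `x`)
with input distribution `q`, with the convention `0 · log 0 = 0` (automatic since
`Real.log 0 = 0`). -/
noncomputable def mutInfo {X Y : Type*} [Fintype X] [Fintype Y]
    (W : Y → X → ℝ) (q : X → ℝ) : ℝ :=
  ∑ y, ∑ x, W y x * q x * Real.log (W y x / ∑ x', W y x' * q x')

/-- The functional `K = Σ_{r,𝐬,a} ρ(r,𝐬|a) ρ(a) log (ρ(r,𝐬|a) / R(r,𝐬|a))`. -/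
noncomputable def Kfun {R S : Type*} [Fintype R] [Fintype S] {A B : ℕ}
    (ρ Rv : R → (Fin B → S) → Fin A → ℝ) (q : Fin A → ℝ) : ℝ :=
  ∑ r, ∑ ss : Fin B → S, ∑ a, ρ r ss a * q a * Real.log (ρ r ss a / Rv r ss a)

/-- The feasible set for `R(r,𝐬|a)`: strictly positive, nonsignaling in `a`,
and normalized. -/
def FeasibleR {R S : Type*} [Fintype R] [Fintype S] {A B : ℕ}
    (Rv : R → (Fin B → S) → Fin A → ℝ) : Prop :=
  (∀ r ss a, 0 < Rv r ss a) ∧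
  (∀ (a a' : Fin A) (ss : Fin B → S), ∑ r, Rv r ss a = ∑ r, Rv r ss a') ∧
  (∀ a, ∑ r, ∑ ss : Fin B → S, Rv r ss a = 1)

/-- The minimizer `R(r,𝐬|a) = ρ(r,𝐬|a) ρ(𝐬) / ρ(𝐬|a)`, where
`ρ(𝐬|a) = Σ_r ρ(r,𝐬|a)` and `ρ(𝐬) = Σ_a ρ(𝐬|a) ρ(a)`. -/
noncomputable def Rstar {R S : Type*} [Fintype R] [Fintype S] {A B : ℕ}
    (ρ : R → (Fin B → S) → Fin A → ℝ) (q : Fin A → ℝ) :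
    R → (Fin B → S) → Fin A → ℝ :=
  fun r ss a => ρ r ss a * (∑ a', (∑ r', ρ r' ss a') * q a') / (∑ r', ρ r' ss a)

/-- The minimum of `K` over the feasible set equals the mutual information of the
channel `ρ(𝐬|a) = Σ_r ρ(r,𝐬|a)` with input distribution `ρ(a)`, and it is attained
at `Rstar`. -/
theorem stmt0 {R S : Type*} [Fintype R] [Fintype S] {A B : ℕ}
    (ρ : R → (Fin B → S) → Fin A → ℝ) (q : Fin A → ℝ)
    (hρpos : ∀ r ss a, 0 < ρ r ss a)
    (hρnorm : ∀ a, ∑ r, ∑ ss : Fin B → S, ρ r ss a = 1)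
    (hq : IsDist q) (hqpos : ∀ a, 0 < q a) :
    IsLeast { k : ℝ | ∃ Rv, FeasibleR Rv ∧ k = Kfun ρ Rv q }
      (mutInfo (fun ss a => ∑ r, ρ r ss a) q)
    ∧ FeasibleR (Rstar ρ q)
    ∧ Kfun ρ (Rstar ρ q) q = mutInfo (fun ss a => ∑ r, ρ r ss a) q := by
  classical
  obtain ⟨hq0, hq1⟩ := hq
  have hA : Nonempty (Fin A) := by
    by_contra h
    rw [not_nonempty_iff] at h
    simp at hq1
  obtain ⟨a₀⟩ := hA
  haveI : Nonempty (Fin A) := ⟨a₀⟩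
  have hR : Nonempty R := by
    by_contra h
    rw [not_nonempty_iff] at h
    have := hρnorm a₀
    simp at this
  haveI := hR
  have hS : Nonempty (Fin B → S) := by
    by_contra h
    rw [not_nonempty_iff] at h
    have := hρnorm a₀
    simp at this
  haveI := hS
  have hWpos : ∀ (ss : Fin B → S) a, 0 < ∑ r, ρ r ss a := fun ss a =>
    Finset.sum_pos (fun r _ => hρpos r ss a) Finset.univ_nonempty
  have hPpos : ∀ ss : Fin B → S, 0 < ∑ a', (∑ r', ρ r' ss a') * q a' := fun ss =>
    Finset.sum_pos (fun a _ => mul_pos (hWpos ss a) (hqpos a)) Finset.univ_nonempty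
  -- rotation lemmas
  have rot : ∀ (f : R → (Fin B → S) → Fin A → ℝ),
      (∑ r, ∑ ss : Fin B → S, ∑ a, f r ss a)
        = ∑ ss : Fin B → S, ∑ a, ∑ r, f r ss a := by
    intro f
    calc (∑ r, ∑ ss : Fin B → S, ∑ a, f r ss a)
        = ∑ ss : Fin B → S, ∑ r, ∑ a, f r ss a := Finset.sum_comm
      _ = ∑ ss : Fin B → S, ∑ a, ∑ r, f r ss a :=
          Finset.sum_congr rfl fun ss _ => Finset.sum_comm
  have rot2 : ∀ (f : R → (Fin B → S) → Fin A → ℝ),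
      (∑ r, ∑ ss : Fin B → S, ∑ a, f r ss a)
        = ∑ a, ∑ r, ∑ ss : Fin B → S, f r ss a := by
    intro f
    calc (∑ r, ∑ ss : Fin B → S, ∑ a, f r ss a)
        = ∑ r, ∑ a, ∑ ss : Fin B → S, f r ss a :=
          Finset.sum_congr rfl fun r _ => Finset.sum_comm
      _ = ∑ a, ∑ r, ∑ ss : Fin B → S, f r ss a := Finset.sum_comm
  have hRstarpos : ∀ r (ss : Fin B → S) a, 0 < Rstar ρ q r ss a := fun r ss a =>
    div_pos (mul_pos (hρpos r ss a) (hPpos ss)) (hWpos ss a)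
  have hRstar_sum : ∀ (ss : Fin B → S) a,
      (∑ r, Rstar ρ q r ss a) = ∑ a', (∑ r', ρ r' ss a') * q a' := by
    intro ss a
    unfold Rstar
    rw [← Finset.sum_div, ← Finset.sum_mul,
      mul_div_cancel_left₀ _ (hWpos ss a).ne']
  have hfeas : FeasibleR (Rstar ρ q) := by
    refine ⟨hRstarpos, fun a a' ss => by rw [hRstar_sum, hRstar_sum], fun a => ?_⟩
    rw [Finset.sum_comm]
    calc (∑ ss : Fin B → S, ∑ r, Rstar ρ q r ss a)
        = ∑ ss : Fin B → S, ∑ a', (∑ r', ρ r' ss a') * q a' :=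
          Finset.sum_congr rfl fun ss _ => hRstar_sum ss a
      _ = ∑ a', ∑ ss : Fin B → S, (∑ r', ρ r' ss a') * q a' := Finset.sum_comm
      _ = ∑ a', (∑ ss : Fin B → S, ∑ r', ρ r' ss a') * q a' := by
          simp_rw [Finset.sum_mul]
      _ = ∑ a', q a' := by
          refine Finset.sum_congr rfl fun a' _ => ?_
          rw [Finset.sum_comm, hρnorm a', one_mul]
      _ = 1 := hq1
  have hKeq : Kfun ρ (Rstar ρ q) q = mutInfo (fun ss a => ∑ r, ρ r ss a) q := by
    unfold Kfun mutInfo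
    rw [rot]
    refine Finset.sum_congr rfl fun ss _ => Finset.sum_congr rfl fun a _ => ?_
    have hlog : ∀ r : R, Real.log (ρ r ss a / Rstar ρ q r ss a)
        = Real.log ((∑ r', ρ r' ss a) / ∑ a', (∑ r', ρ r' ss a') * q a') := by
      intro r
      congr 1
      unfold Rstar
      rw [div_div_eq_mul_div, mul_div_mul_left _ _ (hρpos r ss a).ne']
    calc (∑ r, ρ r ss a * q a * Real.log (ρ r ss a / Rstar ρ q r ss a))
        = ∑ r, ρ r ss a * (q a *
            Real.log ((∑ r', ρ r' ss a) / ∑ a', (∑ r', ρ r' ss a') * q a')) := by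
          refine Finset.sum_congr rfl fun r _ => ?_
          rw [hlog r]; ring
      _ = (∑ r, ρ r ss a) * (q a *
            Real.log ((∑ r', ρ r' ss a) / ∑ a', (∑ r', ρ r' ss a') * q a')) := by
          rw [← Finset.sum_mul]
      _ = _ := by ring
  have key : ∀ Rv, FeasibleR Rv → Kfun ρ (Rstar ρ q) q ≤ Kfun ρ Rv q := by
    rintro Rv ⟨hpos, hns, hnorm⟩
    have hsum1 : (∑ r, ∑ ss : Fin B → S, ∑ a, ρ r ss a * q a) = 1 := by
      rw [rot2]
      calc (∑ a, ∑ r, ∑ ss : Fin B → S, ρ r ss a * q a)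
          = ∑ a, (∑ r, ∑ ss : Fin B → S, ρ r ss a) * q a := by
            simp_rw [Finset.sum_mul]
        _ = 1 := by simp_rw [hρnorm, one_mul]; exact hq1
    have hT : (∑ r, ∑ ss : Fin B → S, ∑ a,
        ρ r ss a * q a * (Rv r ss a / Rstar ρ q r ss a)) = 1 := by
      have hterm2 : ∀ r (ss : Fin B → S) a,
          ρ r ss a * q a * (Rv r ss a / Rstar ρ q r ss a)
            = Rv r ss a * ((∑ r', ρ r' ss a) * q a
                / (∑ a', (∑ r', ρ r' ss a') * q a')) := by
        intro r ss a
        have h1 := (hρpos r ss a).ne'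
        have h2 := (hWpos ss a).ne'
        have h3 := (hPpos ss).ne'
        unfold Rstar
        field_simp
      simp_rw [hterm2]
      rw [rot]
      have hinner : ∀ (ss : Fin B → S) a,
          (∑ r, Rv r ss a * ((∑ r', ρ r' ss a) * q a
              / (∑ a', (∑ r', ρ r' ss a') * q a')))
            = (∑ r, Rv r ss a₀) * ((∑ r', ρ r' ss a) * q a
                / (∑ a', (∑ r', ρ r' ss a') * q a')) := by
        intro ss a
        rw [← Finset.sum_mul, hns a a₀ ss]
      calc (∑ ss : Fin B → S, ∑ a, ∑ r, Rv r ss a * ((∑ r', ρ r' ss a) * q a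
              / (∑ a', (∑ r', ρ r' ss a') * q a')))
          = ∑ ss : Fin B → S, ∑ r, Rv r ss a₀ := by
            refine Finset.sum_congr rfl fun ss _ => ?_
            calc (∑ a, ∑ r, Rv r ss a * ((∑ r', ρ r' ss a) * q a
                    / (∑ a', (∑ r', ρ r' ss a') * q a')))
                = ∑ a, (∑ r, Rv r ss a₀) * ((∑ r', ρ r' ss a) * q a
                    / (∑ a', (∑ r', ρ r' ss a') * q a')) :=
                  Finset.sum_congr rfl fun a _ => hinner ss a
              _ = (∑ r, Rv r ss a₀) * ∑ a, ((∑ r', ρ r' ss a) * q a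
                    / (∑ a', (∑ r', ρ r' ss a') * q a')) := by
                  rw [Finset.mul_sum]
              _ = ∑ r, Rv r ss a₀ := by
                  rw [← Finset.sum_div, div_self (hPpos ss).ne', mul_one]
        _ = ∑ r, ∑ ss : Fin B → S, Rv r ss a₀ := Finset.sum_comm
        _ = 1 := hnorm a₀
    have hdecomp : Kfun ρ Rv q = Kfun ρ (Rstar ρ q) q
        + ∑ r, ∑ ss : Fin B → S, ∑ a,
            ρ r ss a * q a * Real.log (Rstar ρ q r ss a / Rv r ss a) := by
      unfold Kfun
      rw [← Finset.sum_add_distrib]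
      refine Finset.sum_congr rfl fun r _ => ?_
      rw [← Finset.sum_add_distrib]
      refine Finset.sum_congr rfl fun ss _ => ?_
      rw [← Finset.sum_add_distrib]
      refine Finset.sum_congr rfl fun a _ => ?_
      rw [Real.log_div (hρpos r ss a).ne' (hpos r ss a).ne',
        Real.log_div (hρpos r ss a).ne' (hRstarpos r ss a).ne',
        Real.log_div (hRstarpos r ss a).ne' (hpos r ss a).ne']
      ring
    have hD : 0 ≤ ∑ r, ∑ ss : Fin B → S, ∑ a,
        ρ r ss a * q a * Real.log (Rstar ρ q r ss a / Rv r ss a) := by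
      have hge : (∑ r, ∑ ss : Fin B → S, ∑ a,
          ρ r ss a * q a * (1 - Rv r ss a / Rstar ρ q r ss a))
            ≤ ∑ r, ∑ ss : Fin B → S, ∑ a,
                ρ r ss a * q a * Real.log (Rstar ρ q r ss a / Rv r ss a) := by
        refine Finset.sum_le_sum fun r _ => Finset.sum_le_sum fun ss _ =>
          Finset.sum_le_sum fun a _ => ?_
        refine mul_le_mul_of_nonneg_left ?_
          (le_of_lt (mul_pos (hρpos r ss a) (hqpos a)))
        have h1 := Real.log_le_sub_one_of_pos
          (div_pos (hpos r ss a) (hRstarpos r ss a))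
        have h2 : Real.log (Rstar ρ q r ss a / Rv r ss a)
            = - Real.log (Rv r ss a / Rstar ρ q r ss a) := by
          rw [Real.log_div (hRstarpos r ss a).ne' (hpos r ss a).ne',
            Real.log_div (hpos r ss a).ne' (hRstarpos r ss a).ne']
          ring
        rw [h2]; linarith
      have heq : (∑ r, ∑ ss : Fin B → S, ∑ a,
          ρ r ss a * q a * (1 - Rv r ss a / Rstar ρ q r ss a)) = 0 := by
        have : ∀ r (ss : Fin B → S) a,
            ρ r ss a * q a * (1 - Rv r ss a / Rstar ρ q r ss a)
              = ρ r ss a * q a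
                - ρ r ss a * q a * (Rv r ss a / Rstar ρ q r ss a) := by
          intro r ss a; ring
        simp_rw [this, Finset.sum_sub_distrib]
        rw [hsum1, hT]
        ring
      linarith
    linarith
  refine ⟨⟨⟨Rstar ρ q, hfeas, hKeq.symm⟩, ?_⟩, hfeas, hKeq⟩
  rintro k ⟨Rv, hRv, rfl⟩
  rw [← hKeq]
  exact key Rv hRv
end

section
/- Let P(r,s|a,b) be a nonsignaling box such that the set V(P) is nonempty. Then the minimax equality inf_{ρ(r,𝐬|a)∈V(P)} sup_{q} I_q(A;𝐒) = sup_{q} inf_{ρ(r,𝐬|a)∈V(P)} I_q(A;𝐒) holds, where q ranges over all probability distributions on {1,…,A} and I_q(A;𝐒) denotes the mutual information of the channel ρ(𝐬|a) = Σ_r ρ(r,𝐬|a) with input distribution q. -/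
open scoped BigOperators

/-- A nonsignaling box `P(r,s|a,b)`. -/
def IsNSBox {R S : Type*} [Fintype R] [Fintype S] {A B : ℕ}
    (P : R → S → Fin A → Fin B → ℝ) : Prop :=
  (∀ r s a b, 0 ≤ P r s a b) ∧
  (∀ a b, ∑ r, ∑ s, P r s a b = 1) ∧
  (∀ a r b b', ∑ s, P r s a b = ∑ s, P r s a b') ∧
  (∀ b s a a', ∑ r, P r s a b = ∑ r, P r s a' b)

/-- Membership in the set `V(P)`: `ρ(r,𝐬|a)` is a conditional probability over
`r` and sequences `𝐬 ∈ 𝓢^B` whose marginal on `(r, s_b)` is `P(r,s|a,b)`. -/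
def MemV {R S : Type*} [Fintype R] [Fintype S] [DecidableEq S] {A B : ℕ}
    (P : R → S → Fin A → Fin B → ℝ)
    (ρ : R → (Fin B → S) → Fin A → ℝ) : Prop :=
  (∀ r ss a, 0 ≤ ρ r ss a) ∧
  (∀ a, ∑ r, ∑ ss : Fin B → S, ρ r ss a = 1) ∧
  (∀ a b r s, ∑ ss : Fin B → S, (if ss b = s then ρ r ss a else 0) = P r s a b)

/-!
`V(P)` and the probability simplex are compact convex sets, so Sion's minimax theorem applies
once `(ρ, q) ↦ I_q` is continuous, convex in `ρ` and concave in `q`. On nonnegative arguments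
`I_q(W)` is the output entropy `∑_y η((Wq)_y)`, `η(t) = -t log t`, minus the linear term
`∑_x q_x H(W(·|x))`, which gives continuity and concavity in `q`. Written as
`∑_{y,x} u log (u / w)` with `u = W(y|x) q(x)` and `w = (Wq)_y q(x)`, both linear in `W`, it is
convex in `W` by the log-sum inequality, and the channel `∑_r ρ(r,·|·)` is linear in `ρ`.
-/

open Set Real

theorem Sion.sInf_sSup_image_eq_sSup_sInf_image {E F : Type*}
    [TopologicalSpace E] [AddCommGroup E] [Module ℝ E] [IsTopologicalAddGroup E]
    [ContinuousSMul ℝ E]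
    [TopologicalSpace F] [AddCommGroup F] [Module ℝ F] [IsTopologicalAddGroup F]
    [ContinuousSMul ℝ F]
    {X : Set E} {Y : Set F} {f : E → F → ℝ}
    (ne_X : X.Nonempty) (cX : Convex ℝ X) (kX : IsCompact X) (cY : Convex ℝ Y) (kY : IsCompact Y)
    (hfy : ∀ y ∈ Y, LowerSemicontinuousOn (fun x => f x y) X)
    (hfy' : ∀ y ∈ Y, QuasiconvexOn ℝ X fun x => f x y)
    (hfx : ∀ x ∈ X, UpperSemicontinuousOn (f x) Y)
    (hfx' : ∀ x ∈ X, QuasiconcaveOn ℝ Y (f x)) :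
    sInf ((fun x => sSup (f x '' Y)) '' X) = sSup ((fun y => sInf ((f · y) '' X)) '' Y) := by
  rcases Y.eq_empty_or_nonempty with rfl | ne_Y
  · -- both sides are `0`, through `sSup ∅ = 0`
    simp [ne_X.image_const]
  obtain ⟨x₀, hx₀⟩ := ne_X
  obtain ⟨y₀, hy₀⟩ := ne_Y
  have bddAbove_f (x) (hx : x ∈ X) : BddAbove (f x '' Y) := (hfx x hx).bddAbove_of_isCompact kY
  have bddBelow_f (y) (hy : y ∈ Y) : BddBelow ((f · y) '' X) :=
    (hfy y hy).bddBelow_of_isCompact kX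
  obtain ⟨m, hm⟩ := bddBelow_f y₀ hy₀
  obtain ⟨M, hM⟩ := bddAbove_f x₀ hx₀
  refine Sion.minimax ⟨x₀, hx₀⟩ kX hfy hfy' cY hfx hfx' cX _
    (fun x hx => isLUB_csSup ⟨_, mem_image_of_mem _ hy₀⟩ (bddAbove_f x hx)) _
    (isGLB_csInf ⟨_, mem_image_of_mem _ hx₀⟩ ⟨m, ?_⟩) _
    (fun y hy => isGLB_csInf ⟨_, mem_image_of_mem _ hx₀⟩ (bddBelow_f y hy)) _
    (isLUB_csSup ⟨_, mem_image_of_mem _ hy₀⟩ ⟨M, ?_⟩)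
  · rintro _ ⟨x, hx, rfl⟩
    exact (hm (mem_image_of_mem _ hx)).trans (le_csSup (bddAbove_f x hx) (mem_image_of_mem _ hy₀))
  · rintro _ ⟨y, hy, rfl⟩
    exact (csInf_le (bddBelow_f y hy) (mem_image_of_mem _ hx₀)).trans (hM (mem_image_of_mem _ hy))

namespace Real

theorem add_mul_log_div_add_le {u₁ u₂ w₁ w₂ : ℝ} (hu₁ : 0 ≤ u₁) (hu₂ : 0 ≤ u₂)
    (hw₁ : 0 ≤ w₁) (hw₂ : 0 ≤ w₂) (h₁ : w₁ = 0 → u₁ = 0) (h₂ : w₂ = 0 → u₂ = 0) :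
    (u₁ + u₂) * log ((u₁ + u₂) / (w₁ + w₂)) ≤ u₁ * log (u₁ / w₁) + u₂ * log (u₂ / w₂) := by
  rcases hw₁.eq_or_lt with rfl | hw₁
  · simp [h₁ rfl]
  rcases hw₂.eq_or_lt with rfl | hw₂
  · simp [h₂ rfl]
  have hw : 0 < w₁ + w₂ := add_pos hw₁ hw₂
  have key := convexOn_mul_log.2 (mem_Ici.2 (div_nonneg hu₁ hw₁.le))
    (mem_Ici.2 (div_nonneg hu₂ hw₂.le)) (div_nonneg hw₁.le hw.le) (div_nonneg hw₂.le hw.le)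
    (by field_simp)
  have hmix : w₁ / (w₁ + w₂) * (u₁ / w₁) + w₂ / (w₁ + w₂) * (u₂ / w₂) = (u₁ + u₂) / (w₁ + w₂) := by
    field_simp
  simp only [smul_eq_mul, hmix] at key
  calc (u₁ + u₂) * log ((u₁ + u₂) / (w₁ + w₂))
      = (w₁ + w₂) * ((u₁ + u₂) / (w₁ + w₂) * log ((u₁ + u₂) / (w₁ + w₂))) := by field_simp
    _ ≤ (w₁ + w₂) * (w₁ / (w₁ + w₂) * (u₁ / w₁ * log (u₁ / w₁))
          + w₂ / (w₁ + w₂) * (u₂ / w₂ * log (u₂ / w₂))) := by gcongr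
    _ = u₁ * log (u₁ / w₁) + u₂ * log (u₂ / w₂) := by field_simp

theorem mul_mul_log_mul_div_mul (t u w : ℝ) :
    t * u * log (t * u / (t * w)) = t * (u * log (u / w)) := by
  rcases eq_or_ne t 0 with rfl | ht
  · simp
  · rw [mul_div_mul_left _ _ ht, mul_assoc]

theorem mul_log_div_convex_combination_le {a b u₁ u₂ w₁ w₂ : ℝ} (ha : 0 ≤ a) (hb : 0 ≤ b)
    (hu₁ : 0 ≤ u₁) (hu₂ : 0 ≤ u₂) (hw₁ : 0 ≤ w₁) (hw₂ : 0 ≤ w₂)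
    (h₁ : w₁ = 0 → u₁ = 0) (h₂ : w₂ = 0 → u₂ = 0) :
    (a * u₁ + b * u₂) * log ((a * u₁ + b * u₂) / (a * w₁ + b * w₂))
      ≤ a * (u₁ * log (u₁ / w₁)) + b * (u₂ * log (u₂ / w₂)) := by
  rw [← mul_mul_log_mul_div_mul, ← mul_mul_log_mul_div_mul]
  refine add_mul_log_div_add_le (by positivity) (by positivity) (by positivity) (by positivity)
    (fun h => ?_) (fun h => ?_)
  · rcases mul_eq_zero.1 h with h | h <;> simp [h, h₁]
  · rcases mul_eq_zero.1 h with h | h <;> simp [h, h₂]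

end Real

def marginalChannel {R Y X : Type*} [Fintype R] : (R → Y → X → ℝ) →ₗ[ℝ] (Y → X → ℝ) where
  toFun ρ y x := ∑ r, ρ r y x
  map_add' ρ σ := by ext; simp [Finset.sum_add_distrib]
  map_smul' c ρ := by ext; simp [Finset.mul_sum]

theorem marginalChannel_nonneg {R Y X : Type*} [Fintype R] {ρ : R → Y → X → ℝ} (hρ : 0 ≤ ρ) :
    0 ≤ marginalChannel ρ := fun y x => Finset.sum_nonneg fun r _ => hρ r y x

section MutualInformation

variable {X Y : Type*} [Fintype X] [Fintype Y]

theorem mutInfo_eq_sum_mul_log_div (W : Y → X → ℝ) (q : X → ℝ) :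
    mutInfo W q = ∑ y, ∑ x, W y x * q x * log (W y x * q x / ((∑ x', W y x' * q x') * q x)) := by
  unfold mutInfo
  refine Finset.sum_congr rfl fun y _ => Finset.sum_congr rfl fun x _ => ?_
  rcases eq_or_ne (q x) 0 with h | h
  · simp [h]
  · rw [mul_div_mul_right _ _ h]

theorem mutInfo_eq_sum_negMulLog_sub {W : Y → X → ℝ} {q : X → ℝ} (hW : 0 ≤ W) (hq : 0 ≤ q) :
    mutInfo W q = ∑ y, negMulLog (∑ x, W y x * q x) - ∑ x, q x * ∑ y, negMulLog (W y x) := by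
  have hterm (y : Y) (x : X) : W y x * q x * log (W y x / ∑ x', W y x' * q x')
      = W y x * q x * log (W y x) - W y x * q x * log (∑ x', W y x' * q x') := by
    rcases (mul_nonneg (hW y x) (hq x)).eq_or_lt with h | h
    · simp [← h]
    have hv : 0 < ∑ x', W y x' * q x' :=
      h.trans_le <| Finset.single_le_sum (fun x' _ => mul_nonneg (hW y x') (hq x'))
        (Finset.mem_univ x)
    rw [log_div (pos_of_mul_pos_left h (hq x)).ne' hv.ne', mul_sub]
  simp only [mutInfo, hterm, Finset.sum_sub_distrib, ← Finset.sum_mul, negMulLog, Finset.mul_sum,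
    neg_mul, mul_neg, Finset.sum_neg_distrib, sub_neg_eq_add]
  rw [Finset.sum_comm (f := fun x i => q x * (W i x * log (W i x)))]
  simp only [mul_left_comm (q _), mul_assoc]
  ring

theorem convexOn_mutInfo {q : X → ℝ} (hq : 0 ≤ q) :
    ConvexOn ℝ (Ici 0) fun W : Y → X → ℝ => mutInfo W q := by
  refine ⟨convex_Ici 0, fun W₁ (hW₁ : 0 ≤ W₁) W₂ (hW₂ : 0 ≤ W₂) a b ha hb _ => ?_⟩
  have hmass {W : Y → X → ℝ} (hW : 0 ≤ W) (y : Y) (x : X) :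
      (∑ x', W y x' * q x') * q x = 0 → W y x * q x = 0 := by
    intro h
    rcases mul_eq_zero.1 h with h | h
    · exact (Finset.sum_eq_zero_iff_of_nonneg fun x' _ => mul_nonneg (hW y x') (hq x')).1 h x
        (Finset.mem_univ x)
    · rw [h, mul_zero]
  simp only [mutInfo_eq_sum_mul_log_div, smul_eq_mul, Finset.mul_sum, ← Finset.sum_add_distrib]
  gcongr with y _ x _
  have hu : (a • W₁ + b • W₂) y x * q x = a * (W₁ y x * q x) + b * (W₂ y x * q x) := by
    simp only [Pi.add_apply, Pi.smul_apply, smul_eq_mul]; ring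
  have hw : (∑ x', (a • W₁ + b • W₂) y x' * q x') * q x
      = a * ((∑ x', W₁ y x' * q x') * q x) + b * ((∑ x', W₂ y x' * q x') * q x) := by
    simp only [Pi.add_apply, Pi.smul_apply, smul_eq_mul, add_mul, Finset.sum_add_distrib,
      ← Finset.mul_sum, mul_assoc]
  rw [hu, hw]
  exact Real.mul_log_div_convex_combination_le ha hb (mul_nonneg (hW₁ y x) (hq x))
    (mul_nonneg (hW₂ y x) (hq x))
    (mul_nonneg (Finset.sum_nonneg fun x' _ => mul_nonneg (hW₁ y x') (hq x')) (hq x))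
    (mul_nonneg (Finset.sum_nonneg fun x' _ => mul_nonneg (hW₂ y x') (hq x')) (hq x))
    (hmass hW₁ y x) (hmass hW₂ y x)

theorem concaveOn_mutInfo {W : Y → X → ℝ} (hW : 0 ≤ W) : ConcaveOn ℝ (Ici 0) (mutInfo W) := by
  refine ⟨convex_Ici 0, fun q₁ (hq₁ : 0 ≤ q₁) q₂ (hq₂ : 0 ≤ q₂) a b ha hb hab => ?_⟩
  rw [mutInfo_eq_sum_negMulLog_sub hW hq₁, mutInfo_eq_sum_negMulLog_sub hW hq₂,
    mutInfo_eq_sum_negMulLog_sub hW (add_nonneg (smul_nonneg ha hq₁) (smul_nonneg hb hq₂))]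
  have hmix (y : Y) : ∑ x, W y x * (a • q₁ + b • q₂) x
      = a • ∑ x, W y x * q₁ x + b • ∑ x, W y x * q₂ x := by
    simp only [Pi.add_apply, Pi.smul_apply, smul_eq_mul, mul_add, Finset.sum_add_distrib,
      Finset.mul_sum, mul_left_comm]
  have hout (y : Y) : a • negMulLog (∑ x, W y x * q₁ x) + b • negMulLog (∑ x, W y x * q₂ x)
      ≤ negMulLog (∑ x, W y x * (a • q₁ + b • q₂) x) := by
    rw [hmix]
    exact concaveOn_negMulLog.2
      (mem_Ici.2 (Finset.sum_nonneg fun x _ => mul_nonneg (hW y x) (hq₁ x)))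
      (mem_Ici.2 (Finset.sum_nonneg fun x _ => mul_nonneg (hW y x) (hq₂ x))) ha hb hab
  have hcond : ∑ x, (a • q₁ + b • q₂) x * ∑ y, negMulLog (W y x)
      = a * ∑ x, q₁ x * ∑ y, negMulLog (W y x) + b * ∑ x, q₂ x * ∑ y, negMulLog (W y x) := by
    simp only [Pi.add_apply, Pi.smul_apply, smul_eq_mul, add_mul, Finset.sum_add_distrib,
      Finset.mul_sum, mul_assoc]
  have := Finset.sum_le_sum fun y (_ : y ∈ Finset.univ) => hout y
  simp only [Finset.sum_add_distrib, smul_eq_mul, ← Finset.mul_sum] at this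
  simp only [smul_eq_mul]
  linarith

theorem continuousOn_mutInfo :
    ContinuousOn (fun p : (Y → X → ℝ) × (X → ℝ) => mutInfo p.1 p.2) (Ici 0 ×ˢ Ici 0) := by
  refine ContinuousOn.congr (f := fun p : (Y → X → ℝ) × (X → ℝ) =>
    ∑ y, negMulLog (∑ x, p.1 y x * p.2 x) - ∑ x, p.2 x * ∑ y, negMulLog (p.1 y x))
    (by fun_prop) fun p hp => mutInfo_eq_sum_negMulLog_sub hp.1 hp.2

theorem continuousOn_mutInfo_marginalChannel {R : Type*} [Fintype R] :
    ContinuousOn (fun p : (R → Y → X → ℝ) × (X → ℝ) => mutInfo (marginalChannel p.1) p.2)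
      (Ici 0 ×ˢ Ici 0) := by
  have h := continuousOn_mutInfo.comp
    ((marginalChannel.continuous_of_finiteDimensional.comp continuous_fst).prodMk
      continuous_snd).continuousOn
    fun p (hp : p ∈ Ici 0 ×ˢ Ici 0) =>
      ⟨marginalChannel_nonneg (R := R) (Y := Y) (X := X) hp.1, hp.2⟩
  dsimp only [Function.comp_def] at h
  exact h

end MutualInformation

section NonsignalingExtension

variable {R S : Type*} [Fintype R] [Fintype S] [DecidableEq S] {A B : ℕ}
  {P : R → S → Fin A → Fin B → ℝ} {ρ : R → (Fin B → S) → Fin A → ℝ}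

theorem MemV.nonneg (hρ : MemV P ρ) : 0 ≤ ρ := hρ.1

theorem MemV.le_one (hρ : MemV P ρ) : ρ ≤ 1 := fun r ss a =>
  calc ρ r ss a ≤ ∑ ss', ρ r ss' a :=
      Finset.single_le_sum (f := (ρ r · a)) (fun _ _ => hρ.1 _ _ _) (Finset.mem_univ _)
    _ ≤ ∑ r', ∑ ss', ρ r' ss' a :=
      Finset.single_le_sum (f := fun r' => ∑ ss', ρ r' ss' a)
        (fun _ _ => Finset.sum_nonneg fun _ _ => hρ.1 _ _ _) (Finset.mem_univ _)
    _ = 1 := hρ.2.1 a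

variable (P) in
theorem isClosed_setOf_memV : IsClosed {ρ | MemV P ρ} := by
  simp only [MemV, ofPred_and, ofPred_forall]
  refine .inter ?_ (.inter ?_ ?_) <;>
  refine isClosed_iInter fun _ => ?_
  · exact isClosed_iInter fun _ => isClosed_iInter fun _ => isClosed_le (by fun_prop) (by fun_prop)
  · exact isClosed_eq (by fun_prop) (by fun_prop)
  · refine isClosed_iInter fun _ => isClosed_iInter fun _ => isClosed_iInter fun _ => ?_
    exact isClosed_eq
      (continuous_finsetSum _ fun _ _ => continuous_if_const _ (by fun_prop) (by fun_prop))
      continuous_const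

variable (P) in
theorem isCompact_setOf_memV : IsCompact {ρ | MemV P ρ} :=
  isCompact_Icc.of_isClosed_subset (isClosed_setOf_memV P) fun _ hρ => ⟨hρ.nonneg, hρ.le_one⟩

variable (P) in
theorem convex_setOf_memV : Convex ℝ {ρ | MemV P ρ} := by
  intro ρ₁ h₁ ρ₂ h₂ a b ha hb hab
  refine ⟨fun r ss x => ?_, fun x => ?_, fun x y r s => ?_⟩
  · have := h₁.1 r ss x
    have := h₂.1 r ss x
    simp only [Pi.add_apply, Pi.smul_apply, smul_eq_mul]
    positivity
  · simp only [Pi.add_apply, Pi.smul_apply, smul_eq_mul, Finset.sum_add_distrib, ← Finset.mul_sum,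
      h₁.2.1, h₂.2.1, mul_one, hab]
  · have e₁ := h₁.2.2 x y r s
    have e₂ := h₂.2.2 x y r s
    simp only [← Finset.sum_filter] at e₁ e₂ ⊢
    simp only [Pi.add_apply, Pi.smul_apply, smul_eq_mul, Finset.sum_add_distrib, ← Finset.mul_sum,
      e₁, e₂, ← add_mul, hab, one_mul]

end NonsignalingExtension

theorem Set.setOf_exists_and_eq_eq_image {α β : Type*} (p : α → Prop) (g : α → β) :
    {b | ∃ a, p a ∧ b = g a} = g '' {a | p a} := by
  ext
  simp [eq_comm]

theorem stmt1_general {R S : Type*} [Fintype R] [Fintype S] [DecidableEq S] {A B : ℕ}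
    (P : R → S → Fin A → Fin B → ℝ)
    (hne : ∃ ρ, MemV P ρ) :
    sInf { x : ℝ | ∃ ρ, MemV P ρ ∧
        x = sSup { y : ℝ | ∃ q : Fin A → ℝ, IsDist q ∧
              y = mutInfo (fun ss a => ∑ r, ρ r ss a) q } }
    = sSup { y : ℝ | ∃ q : Fin A → ℝ, IsDist q ∧
        y = sInf { x : ℝ | ∃ ρ, MemV P ρ ∧
              x = mutInfo (fun ss a => ∑ r, ρ r ss a) q } } := by
  have hcont := continuousOn_mutInfo_marginalChannel.mono
    fun p (hp : p ∈ {ρ | MemV P ρ} ×ˢ stdSimplex ℝ (Fin A)) => ⟨hp.1.nonneg, hp.2.1⟩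
  simp only [setOf_exists_and_eq_eq_image]
  exact Sion.sInf_sSup_image_eq_sSup_sInf_image hne (convex_setOf_memV P) (isCompact_setOf_memV P)
    (convex_stdSimplex ℝ (Fin A)) (isCompact_stdSimplex ℝ (Fin A))
    (fun q hq => (hcont.uncurry_right q hq).lowerSemicontinuousOn)
    (fun q hq => (((convexOn_mutInfo hq.1).comp_linearMap marginalChannel).subset
      (fun _ hρ => marginalChannel_nonneg hρ.nonneg) (convex_setOf_memV P)).quasiconvexOn)
    (fun ρ hρ => (hcont.uncurry_left (f := fun ρ => mutInfo (marginalChannel ρ)) ρ hρ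
      ).upperSemicontinuousOn)
    (fun ρ hρ => ((concaveOn_mutInfo (marginalChannel_nonneg hρ.nonneg)).subset
      (fun _ hq => hq.1) (convex_stdSimplex ℝ (Fin A))).quasiconcaveOn)

/-- Minimax equality: `inf_{ρ ∈ V(P)} sup_q I_q(A;𝐒) = sup_q inf_{ρ ∈ V(P)} I_q(A;𝐒)`. -/
theorem stmt1 {R S : Type*} [Fintype R] [Fintype S] [DecidableEq S] {A B : ℕ}
    (P : R → S → Fin A → Fin B → ℝ) (hP : IsNSBox P)
    (hne : ∃ ρ, MemV P ρ) :
    sInf { x : ℝ | ∃ ρ, MemV P ρ ∧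
        x = sSup { y : ℝ | ∃ q : Fin A → ℝ, IsDist q ∧
              y = mutInfo (fun ss a => ∑ r, ρ r ss a) q } }
    = sSup { y : ℝ | ∃ q : Fin A → ℝ, IsDist q ∧
        y = sInf { x : ℝ | ∃ ρ, MemV P ρ ∧
              x = mutInfo (fun ss a => ∑ r, ρ r ss a) q } } :=
  stmt1_general P hne
end

section
/- For every nonsignaling box P(r,s|a,b), the set V(P) is nonempty; that is, there exists a conditional probability ρ(r,𝐬|a) over r∈𝓡 and 𝐬=(s_1,…,s_B)∈𝓢^B whose marginal on (r,s_b) equals P(r,s|a,b) for every a and b. -/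
open scoped BigOperators

/-- For every nonsignaling box `P`, the set `V(P)` is nonempty. -/
theorem stmt4 {R S : Type*} [Fintype R] [Fintype S] [DecidableEq S]
    [Nonempty R] [Nonempty S] {A B : ℕ}
    (P : R → S → Fin A → Fin B → ℝ) (hP : IsNSBox P) :
    ∃ ρ : R → (Fin B → S) → Fin A → ℝ, MemV P ρ := by
  obtain ⟨h1, h2, h3, h4⟩ := hP
  rcases Nat.eq_zero_or_pos B with hB | hB
  · subst hB
    refine ⟨fun _ _ _ => (Fintype.card R : ℝ)⁻¹, fun _ _ _ => by positivity, ?_, ?_⟩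
    · intro a
      have hR : (Fintype.card R : ℝ) ≠ 0 := by
        exact_mod_cast Fintype.card_ne_zero
      simp [Finset.sum_const, Finset.card_univ, mul_inv_cancel₀ hR]
    · intro a b; exact absurd b.isLt (by omega)
  · set b0 : Fin B := ⟨0, hB⟩ with hb0
    set p : R → Fin A → ℝ := fun r a => ∑ s, P r s a b0 with hp
    have hp_eq : ∀ r a b, ∑ s, P r s a b = p r a := fun r a b => h3 a r b b0
    have hp0 : ∀ r a, 0 ≤ p r a := fun r a =>
      Finset.sum_nonneg fun s _ => h1 r s a b0
    have hPle : ∀ r s a b, p r a = 0 → P r s a b = 0 := by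
      intro r s a b hpz
      have h := hp_eq r a b
      rw [hpz] at h
      exact (Finset.sum_eq_zero_iff_of_nonneg fun s _ => h1 r s a b).mp h s
        (Finset.mem_univ s)
    have key : ∀ (f : Fin B → S → ℝ),
        ∑ ss : Fin B → S, ∏ b, f b (ss b) = ∏ b, ∑ s, f b s :=
      fun f => (Fintype.prod_sum f).symm
    refine ⟨fun r ss a => p r a * ∏ b, (P r (ss b) a b / p r a), ?_, ?_, ?_⟩
    · intro r ss a
      exact mul_nonneg (hp0 r a) (Finset.prod_nonneg fun b _ =>
        div_nonneg (h1 r (ss b) a b) (hp0 r a))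
    · intro a
      have hterm : ∀ r : R,
          ∑ ss : Fin B → S, p r a * ∏ b, (P r (ss b) a b / p r a) = p r a := by
        intro r
        rw [← Finset.mul_sum, key fun b s => P r s a b / p r a]
        by_cases hpz : p r a = 0
        · simp [hpz]
        · have : ∀ b : Fin B, ∑ s, P r s a b / p r a = 1 := by
            intro b
            rw [← Finset.sum_div, hp_eq r a b, div_self hpz]
          rw [Finset.prod_congr rfl fun b _ => this b, Finset.prod_const_one,
            mul_one]
      calc ∑ r, ∑ ss : Fin B → S, p r a * ∏ b, (P r (ss b) a b / p r a)
          = ∑ r, p r a := Finset.sum_congr rfl fun r _ => hterm r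
        _ = ∑ r, ∑ s, P r s a b0 := rfl
        _ = 1 := h2 a b0
    · intro a b r s
      by_cases hpz : p r a = 0
      · have : ∀ ss : Fin B → S,
            (if ss b = s then p r a * ∏ b', (P r (ss b') a b' / p r a) else 0)
              = 0 := by
          intro ss; rw [hpz]; simp
        rw [Finset.sum_congr rfl fun ss _ => this ss, Finset.sum_const_zero,
          (hPle r s a b hpz).symm]
      · set g : Fin B → S → ℝ := fun b' s' =>
          if b' = b then (if s' = s then P r s' a b' / p r a else 0)
          else P r s' a b' / p r a with hg
        have hstep : ∀ ss : Fin B → S,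
            (if ss b = s then p r a * ∏ b', (P r (ss b') a b' / p r a) else 0)
              = p r a * ∏ b', g b' (ss b') := by
          intro ss
          by_cases hss : ss b = s
          · rw [if_pos hss]
            congr 1
            refine Finset.prod_congr rfl fun b' _ => ?_
            by_cases hb' : b' = b
            · subst hb'; simp [hg, hss]
            · simp [hg, hb']
          · rw [if_neg hss]
            have : g b (ss b) = 0 := by simp [hg, hss]
            rw [Finset.prod_eq_zero (Finset.mem_univ b) this, mul_zero]
        rw [Finset.sum_congr rfl fun ss _ => hstep ss, ← Finset.mul_sum,
          key g]
        have hprod : ∏ b', ∑ s', g b' s' = P r s a b / p r a := by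
          rw [Finset.prod_eq_single b]
          · simp [hg]
          · intro b' _ hb'
            simp only [hg, if_neg hb']
            rw [← Finset.sum_div, hp_eq r a b', div_self hpz]
          · intro h; exact absurd (Finset.mem_univ b) h
        rw [hprod, mul_comm, div_mul_cancel₀ _ hpz]
end

section
/- Let ρ(r,𝐬|a) be a conditional probability distribution over r∈𝓡, 𝐬∈𝓢^B given a∈{1,…,A}, let ρ(a) be a probability distribution, and let λ(r,s,a,b) be real coefficients satisfying the dual constraint Σ_a ρ(a) max_r exp(Σ_b λ(r,s_b,a,b)) ≤ 1 for every 𝐬∈𝓢^B. Then L₂ := −Σ_{r,𝐬,a} ρ(r,𝐬|a)ρ(a) log[ (ρ(𝐬)/ρ(𝐬|a)) · exp(Σ_b λ(r,s_b,a,b)) ] ≥ 0, where ρ(𝐬|a) = Σ_r ρ(r,𝐬|a) and ρ(𝐬) = Σ_a ρ(𝐬|a)ρ(a) (terms with ρ(r,𝐬|a)ρ(a) = 0 contribute 0). -/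
open scoped BigOperators

/-- If the dual constraint `Σ_a ρ(a) max_r exp(Σ_b λ(r,s_b,a,b)) ≤ 1` holds for
every sequence `𝐬`, then
`L₂ = −Σ_{r,𝐬,a} ρ(r,𝐬|a) ρ(a) log[(ρ(𝐬)/ρ(𝐬|a)) exp(Σ_b λ(r,s_b,a,b))] ≥ 0`,
where `ρ(𝐬|a) = Σ_r ρ(r,𝐬|a)` and `ρ(𝐬) = Σ_a ρ(𝐬|a) ρ(a)`. -/
theorem stmt5 {R S : Type*} [Fintype R] [Fintype S] [Nonempty R] {A B : ℕ}
    (ρ : R → (Fin B → S) → Fin A → ℝ) (q : Fin A → ℝ)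
    (lam : R → S → Fin A → Fin B → ℝ)
    (hρ0 : ∀ r ss a, 0 ≤ ρ r ss a)
    (hρn : ∀ a, ∑ r, ∑ ss : Fin B → S, ρ r ss a = 1)
    (hq : IsDist q)
    (hdual : ∀ ss : Fin B → S,
      ∑ a, q a * ⨆ r, Real.exp (∑ b, lam r (ss b) a b) ≤ 1) :
    0 ≤ -∑ r, ∑ ss : Fin B → S, ∑ a, ρ r ss a * q a *
        Real.log ((∑ a', (∑ r', ρ r' ss a') * q a') / (∑ r', ρ r' ss a) *
          Real.exp (∑ b, lam r (ss b) a b)) := by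
  obtain ⟨hq0, hq1⟩ := hq
  rw [neg_nonneg]
  have hNnn : ∀ ss : Fin B → S, 0 ≤ ∑ a', (∑ r', ρ r' ss a') * q a' := fun ss =>
    Finset.sum_nonneg fun a _ =>
      mul_nonneg (Finset.sum_nonneg fun r _ => hρ0 r ss a) (hq0 a)
  have hDnn : ∀ ss (a : Fin A), 0 ≤ ∑ r', ρ r' ss a := fun ss a =>
    Finset.sum_nonneg fun r _ => hρ0 r ss a
  -- a helper to reorder triple sums
  have swap3 : ∀ f : R → (Fin B → S) → Fin A → ℝ,
      ∑ r, ∑ ss : Fin B → S, ∑ a, f r ss a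
        = ∑ ss : Fin B → S, ∑ a, ∑ r, f r ss a := by
    intro f
    rw [Finset.sum_comm]
    exact Finset.sum_congr rfl fun ss _ => Finset.sum_comm
  -- step 1: log x ≤ x - 1 pointwise
  have h1 : (∑ r, ∑ ss : Fin B → S, ∑ a, ρ r ss a * q a *
        Real.log ((∑ a', (∑ r', ρ r' ss a') * q a') / (∑ r', ρ r' ss a) *
          Real.exp (∑ b, lam r (ss b) a b)))
      ≤ ∑ r, ∑ ss : Fin B → S, ∑ a, ρ r ss a * q a *
        ((∑ a', (∑ r', ρ r' ss a') * q a') / (∑ r', ρ r' ss a) *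
          Real.exp (∑ b, lam r (ss b) a b) - 1) := by
    refine Finset.sum_le_sum fun r _ => Finset.sum_le_sum fun ss _ =>
      Finset.sum_le_sum fun a _ => ?_
    rcases eq_or_lt_of_le (mul_nonneg (hρ0 r ss a) (hq0 a)) with h | h
    · rw [← h, zero_mul, zero_mul]
    · have hρp : 0 < ρ r ss a := by
        rcases (hρ0 r ss a).lt_or_eq with h' | h'
        · exact h'
        · exfalso; rw [← h', zero_mul] at h; exact lt_irrefl 0 h
      have hqp : 0 < q a := by
        rcases (hq0 a).lt_or_eq with h' | h'
        · exact h'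
        · exfalso; rw [← h', mul_zero] at h; exact lt_irrefl 0 h
      have hDp : 0 < ∑ r', ρ r' ss a :=
        lt_of_lt_of_le hρp (Finset.single_le_sum (fun r' _ => hρ0 r' ss a)
          (Finset.mem_univ r))
      have hNp : 0 < ∑ a', (∑ r', ρ r' ss a') * q a' :=
        lt_of_lt_of_le (mul_pos hDp hqp)
          (Finset.single_le_sum
            (fun a' _ => mul_nonneg (hDnn ss a') (hq0 a'))
            (Finset.mem_univ a))
      have hT : 0 < (∑ a', (∑ r', ρ r' ss a') * q a') / (∑ r', ρ r' ss a) *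
          Real.exp (∑ b, lam r (ss b) a b) :=
        mul_pos (div_pos hNp hDp) (Real.exp_pos _)
      exact mul_le_mul_of_nonneg_left (Real.log_le_sub_one_of_pos hT) h.le
  -- total mass is one
  have h3 : ∑ r, ∑ ss : Fin B → S, ∑ a, ρ r ss a * q a = 1 := by
    rw [swap3, Finset.sum_comm]
    calc ∑ a, ∑ ss : Fin B → S, ∑ r, ρ r ss a * q a
        = ∑ a, (∑ r, ∑ ss : Fin B → S, ρ r ss a) * q a := by
          refine Finset.sum_congr rfl fun a _ => ?_
          rw [Finset.sum_comm, Finset.sum_mul]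
          exact Finset.sum_congr rfl fun ss _ => (Finset.sum_mul ..).symm
      _ = ∑ a, q a := by
          refine Finset.sum_congr rfl fun a _ => ?_
          rw [hρn a, one_mul]
      _ = 1 := hq1
  -- the main bound: Σ p T ≤ 1
  have h4 : ∑ r, ∑ ss : Fin B → S, ∑ a, ρ r ss a * q a *
        ((∑ a', (∑ r', ρ r' ss a') * q a') / (∑ r', ρ r' ss a) *
          Real.exp (∑ b, lam r (ss b) a b)) ≤ 1 := by
    rw [swap3]
    have key : ∀ ss : Fin B → S, ∑ a, ∑ r, ρ r ss a * q a *
          ((∑ a', (∑ r', ρ r' ss a') * q a') / (∑ r', ρ r' ss a) *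
            Real.exp (∑ b, lam r (ss b) a b))
        ≤ ∑ a', (∑ r', ρ r' ss a') * q a' := by
      intro ss
      set N : ℝ := ∑ a', (∑ r', ρ r' ss a') * q a' with hNdef
      have step : ∀ a : Fin A, ∑ r, ρ r ss a * q a *
            (N / (∑ r', ρ r' ss a) * Real.exp (∑ b, lam r (ss b) a b))
          ≤ N * (q a * ⨆ r, Real.exp (∑ b, lam r (ss b) a b)) := by
        intro a
        set D : ℝ := ∑ r', ρ r' ss a with hDdef
        set M : ℝ := ⨆ r, Real.exp (∑ b, lam r (ss b) a b) with hMdef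
        have hbdd : BddAbove (Set.range fun r => Real.exp (∑ b, lam r (ss b) a b)) :=
          Set.Finite.bddAbove (Set.finite_range _)
        have hEle : ∀ r, Real.exp (∑ b, lam r (ss b) a b) ≤ M := fun r =>
          le_ciSup hbdd r
        have hMnn : 0 ≤ M :=
          le_trans (Real.exp_pos _).le (hEle (Classical.arbitrary R))
        have hdm : N / D * D ≤ N := by
          rcases eq_or_ne D 0 with h0 | h0
          · rw [h0, mul_zero]; exact hNnn ss
          · rw [div_mul_cancel₀ _ h0]
        calc ∑ r, ρ r ss a * q a *
              (N / D * Real.exp (∑ b, lam r (ss b) a b))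
            ≤ ∑ r, ρ r ss a * (q a * (N / D * M)) := by
              refine Finset.sum_le_sum fun r _ => ?_
              have h1' : N / D * Real.exp (∑ b, lam r (ss b) a b) ≤ N / D * M :=
                mul_le_mul_of_nonneg_left (hEle r) (div_nonneg (hNnn ss) (hDnn ss a))
              calc ρ r ss a * q a * (N / D * Real.exp (∑ b, lam r (ss b) a b))
                  ≤ ρ r ss a * q a * (N / D * M) :=
                    mul_le_mul_of_nonneg_left h1' (mul_nonneg (hρ0 r ss a) (hq0 a))
                _ = ρ r ss a * (q a * (N / D * M)) := by ring
          _ = D * (q a * (N / D * M)) := by rw [← Finset.sum_mul]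
          _ = (N / D * D) * (q a * M) := by ring
          _ ≤ N * (q a * M) :=
              mul_le_mul_of_nonneg_right hdm (mul_nonneg (hq0 a) hMnn)
          _ = N * (q a * M) := rfl
      calc ∑ a, ∑ r, ρ r ss a * q a *
            (N / (∑ r', ρ r' ss a) * Real.exp (∑ b, lam r (ss b) a b))
          ≤ ∑ a, N * (q a * ⨆ r, Real.exp (∑ b, lam r (ss b) a b)) :=
            Finset.sum_le_sum fun a _ => step a
        _ = N * ∑ a, q a * ⨆ r, Real.exp (∑ b, lam r (ss b) a b) := by
            rw [Finset.mul_sum]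
        _ ≤ N * 1 := mul_le_mul_of_nonneg_left (hdual ss) (hNnn ss)
        _ = N := mul_one N
    calc ∑ ss : Fin B → S, ∑ a, ∑ r, ρ r ss a * q a *
          ((∑ a', (∑ r', ρ r' ss a') * q a') / (∑ r', ρ r' ss a) *
            Real.exp (∑ b, lam r (ss b) a b))
        ≤ ∑ ss : Fin B → S, ∑ a', (∑ r', ρ r' ss a') * q a' :=
          Finset.sum_le_sum fun ss _ => key ss
      _ = ∑ a', (∑ ss : Fin B → S, ∑ r', ρ r' ss a') * q a' := by
          rw [Finset.sum_comm]
          refine Finset.sum_congr rfl fun a _ => ?_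
          rw [Finset.sum_mul]
      _ = ∑ a', q a' := by
          refine Finset.sum_congr rfl fun a _ => ?_
          rw [Finset.sum_comm, hρn a, one_mul]
      _ = 1 := hq1
  -- combine
  have h2 : ∑ r, ∑ ss : Fin B → S, ∑ a, ρ r ss a * q a *
        ((∑ a', (∑ r', ρ r' ss a') * q a') / (∑ r', ρ r' ss a) *
          Real.exp (∑ b, lam r (ss b) a b) - 1)
      = (∑ r, ∑ ss : Fin B → S, ∑ a, ρ r ss a * q a *
          ((∑ a', (∑ r', ρ r' ss a') * q a') / (∑ r', ρ r' ss a) *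
            Real.exp (∑ b, lam r (ss b) a b)))
        - ∑ r, ∑ ss : Fin B → S, ∑ a, ρ r ss a * q a := by
    simp [mul_sub, Finset.sum_sub_distrib]
  linarith [h1, h4, h2, h3]
end

section
/- Let P(r,s|a,b) be a nonsignaling box, let ρ(r,𝐬|a)∈V(P), let ρ(a) be a probability distribution on {1,…,A}, and let λ(r,s,a,b) be arbitrary real coefficients. Then the mutual information of the channel ρ(𝐬|a)=Σ_r ρ(r,𝐬|a) with input ρ(a) satisfies I(A;𝐒) ≥ Σ_{r,s,a,b} P(r,s|a,b)ρ(a)λ(r,s,a,b) + K_λ, where K_λ = −log max_{𝐬∈𝓢^B} Σ_a ρ(a) max_r exp(Σ_b λ(r,s_b,a,b)). -/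
open scoped BigOperators

/-!
The bound is the Donsker–Varadhan variational inequality for mutual information, tested against
`g(𝐬,a) = max_r exp(Σ_b λ(r,s_b,a,b))`. Gibbs' inequality (`log x ≤ x - 1`) gives
`Σ p log g ≤ Σ p log (p/m) + log Σ m g` for the joint law `p(𝐬,a) = ρ(a) ρ(𝐬|a)` and the product law
`m(𝐬,a) = ρ(a) ρ(𝐬)`, and `Σ m g ≤ max_𝐬 Σ_a ρ(a) g(𝐬,a)`. Since `ρ` reproduces the marginals of
`P`, the linear term equals `Σ ρ(a) ρ(r,𝐬|a) Σ_b λ(r,s_b,a,b)`, and each exponent is at most `log g`.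
-/

open Finset Real

theorem sum_mul_log_le_sum_mul_log_div_add_log {ι : Type*} [Fintype ι] {p m g : ι → ℝ} {c : ℝ}
    (hp : ∀ i, 0 ≤ p i) (hp1 : ∑ i, p i = 1) (hm : ∀ i, 0 ≤ m i)
    (hpm : ∀ i, m i = 0 → p i = 0) (hg : ∀ i, 0 < g i) (hc : ∑ i, m i * g i ≤ c) :
    ∑ i, p i * log (g i) ≤ ∑ i, p i * log (p i / m i) + log c := by
  set Z := ∑ i, m i * g i
  have hZ : 0 < Z := by
    obtain ⟨i, hi⟩ : ∃ i, p i ≠ 0 := by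
      by_contra! h
      simp [h] at hp1
    have hmi : 0 < m i := (hm i).lt_of_ne fun h => hi (hpm i h.symm)
    exact (mul_pos hmi (hg i)).trans_le
      (single_le_sum (fun j _ => mul_nonneg (hm j) (hg j).le) (mem_univ i))
  -- `log x ≤ x - 1` at `x = m i g i / (p i Z)`, weighted by `p i`
  have key : ∀ i, p i * log (g i) - p i * log (p i / m i) - p i * log Z ≤ m i * g i / Z - p i := by
    intro i
    rcases (hp i).eq_or_lt with hpi | hpi
    · rw [← hpi]; simpa using div_nonneg (mul_nonneg (hm i) (hg i).le) hZ.le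
    have hmi : 0 < m i := (hm i).lt_of_ne fun h => hpi.ne' (hpm i h.symm)
    have hgi := hg i
    have hx := log_le_sub_one_of_pos (by positivity : 0 < m i * g i / (p i * Z))
    rw [log_div (by positivity) (by positivity), log_mul hmi.ne' (hg i).ne',
      log_mul hpi.ne' hZ.ne'] at hx
    rw [log_div hpi.ne' hmi.ne']
    have := mul_le_mul_of_nonneg_left hx hpi.le
    field_simp at this ⊢
    linarith
  have hsum := sum_le_sum fun i (_ : i ∈ univ) => key i
  simp only [sum_sub_distrib, ← sum_mul, ← sum_div, hp1, one_mul] at hsum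
  linarith [div_self hZ.ne', log_le_log hZ hc]

theorem sum_mul_log_le_mutInfo_add_log {X Y : Type*} [Fintype X] [Fintype Y]
    {W : Y → X → ℝ} {q : X → ℝ} {g : Y → X → ℝ} {c : ℝ}
    (hW : ∀ y x, 0 ≤ W y x) (hW1 : ∀ x, ∑ y, W y x = 1) (hq : IsDist q)
    (hg : ∀ y x, 0 < g y x) (hc : ∀ y, ∑ x, q x * g y x ≤ c) :
    ∑ y, ∑ x, W y x * q x * log (g y x) ≤ mutInfo W q + log c := by
  set out : Y → ℝ := fun y => ∑ x, W y x * q x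
  have hout : ∀ y, 0 ≤ out y := fun y => sum_nonneg fun x _ => mul_nonneg (hW y x) (hq.1 x)
  have hout1 : ∑ y, out y = 1 := by
    rw [sum_comm]; simp [← sum_mul, hW1, hq.2]
  have := sum_mul_log_le_sum_mul_log_div_add_log (ι := Y × X) (c := c)
    (p := fun i => W i.1 i.2 * q i.2) (m := fun i => out i.1 * q i.2) (g := fun i => g i.1 i.2)
    (fun i => mul_nonneg (hW _ _) (hq.1 _)) (by rwa [Fintype.sum_prod_type])
    (fun i => mul_nonneg (hout _) (hq.1 _)) ?_ (fun i => hg _ _) ?_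
  · simp only [Fintype.sum_prod_type] at this
    convert this using 2
    refine sum_congr rfl fun y _ => sum_congr rfl fun x _ => ?_
    rcases eq_or_ne (q x) 0 with hqx | hqx
    · simp [hqx]
    · rw [mul_div_mul_right _ _ hqx]
  · rintro ⟨y, x⟩ h
    rcases mul_eq_zero.1 h with h | h
    · exact (sum_eq_zero_iff_of_nonneg fun x _ => mul_nonneg (hW y x) (hq.1 x)).1 h x (mem_univ x)
    · simp [h]
  · rw [Fintype.sum_prod_type]
    calc ∑ y, ∑ x, out y * q x * g y x = ∑ y, out y * ∑ x, q x * g y x := by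
          simp only [mul_sum, mul_assoc]
      _ ≤ ∑ y, out y * c := sum_le_sum fun y _ => mul_le_mul_of_nonneg_left (hc y) (hout y)
      _ = c := by rw [← sum_mul, hout1, one_mul]

section
variable {R S : Type*} [Fintype R] [Fintype S] [DecidableEq S] {A B : ℕ}
  {P : R → S → Fin A → Fin B → ℝ} {ρ : R → (Fin B → S) → Fin A → ℝ}

theorem MemV.sum_mul_apply (hρ : MemV P ρ) (r : R) (a : Fin A) (b : Fin B) (h : S → ℝ) :
    ∑ ss : Fin B → S, ρ r ss a * h (ss b) = ∑ s, P r s a b * h s := by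
  simp_rw [← hρ.2.2 a b r, sum_mul, ite_mul, zero_mul]
  rw [sum_comm]
  simp

theorem MemV.sum_mul_sum_eq (hρ : MemV P ρ) (q : Fin A → ℝ) (lam : R → S → Fin A → Fin B → ℝ) :
    ∑ r, ∑ s, ∑ a, ∑ b, P r s a b * q a * lam r s a b
      = ∑ ss : Fin B → S, ∑ a, q a * ∑ r, ρ r ss a * ∑ b, lam r (ss b) a b := by
  calc ∑ r, ∑ s, ∑ a, ∑ b, P r s a b * q a * lam r s a b
      = ∑ a, ∑ r, ∑ b, ∑ s, P r s a b * (q a * lam r s a b) := by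
        simp_rw [sum_comm (γ := S) (α := Fin A), sum_comm (γ := S) (α := Fin B),
          sum_comm (γ := R) (α := Fin A), mul_assoc]
    _ = ∑ a, ∑ r, ∑ b, ∑ ss : Fin B → S, ρ r ss a * (q a * lam r (ss b) a b) := by
        refine sum_congr rfl fun a _ => sum_congr rfl fun r _ => sum_congr rfl fun b _ => ?_
        exact (hρ.sum_mul_apply r a b fun s => q a * lam r s a b).symm
    _ = _ := by
        simp_rw [mul_sum, sum_comm (γ := Fin B → S) (α := Fin A),
          sum_comm (γ := Fin B → S) (α := R), sum_comm (γ := Fin B → S) (α := Fin B)]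
        simp only [mul_left_comm]
end

theorem Real.iSup_exp_pos {ι : Type*} [Finite ι] [Nonempty ι] (f : ι → ℝ) :
    0 < ⨆ i, exp (f i) :=
  (exp_pos _).trans_le
    (le_ciSup (Finite.bddAbove_range fun i => exp (f i)) (Classical.arbitrary ι))

theorem Real.le_log_iSup_exp {ι : Type*} [Finite ι] [Nonempty ι] (f : ι → ℝ) (i : ι) :
    f i ≤ log (⨆ j, exp (f j)) :=
  (le_log_iff_exp_le (iSup_exp_pos f)).2 (le_ciSup (Finite.bddAbove_range fun j => exp (f j)) i)

theorem stmt6_general {R S : Type*} [Fintype R] [Fintype S] [DecidableEq S]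
    [Nonempty R] {A B : ℕ}
    (P : R → S → Fin A → Fin B → ℝ)
    (ρ : R → (Fin B → S) → Fin A → ℝ) (hρ : MemV P ρ)
    (q : Fin A → ℝ) (hq : IsDist q)
    (lam : R → S → Fin A → Fin B → ℝ) :
    (∑ r, ∑ s, ∑ a, ∑ b, P r s a b * q a * lam r s a b)
      + (-Real.log (⨆ ss : Fin B → S,
          ∑ a, q a * ⨆ r, Real.exp (∑ b, lam r (ss b) a b)))
    ≤ mutInfo (fun ss a => ∑ r, ρ r ss a) q := by
  have hlin : ∑ r, ∑ s, ∑ a, ∑ b, P r s a b * q a * lam r s a b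
      ≤ ∑ ss : Fin B → S, ∑ a, (∑ r, ρ r ss a) * q a
          * log (⨆ r, exp (∑ b, lam r (ss b) a b)) := by
    rw [hρ.sum_mul_sum_eq]
    refine sum_le_sum fun ss _ => sum_le_sum fun a _ => ?_
    rw [sum_mul, sum_mul, mul_sum]
    refine sum_le_sum fun r _ => ?_
    have := mul_le_mul_of_nonneg_left (le_log_iSup_exp (fun r => ∑ b, lam r (ss b) a b) r)
      (mul_nonneg (hq.1 a) (hρ.1 r ss a))
    linarith
  have hmut := sum_mul_log_le_mutInfo_add_log
    (fun ss a => sum_nonneg fun r _ => hρ.1 r ss a)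
    (fun a => by rw [sum_comm]; exact hρ.2.1 a) hq
    (fun ss a => iSup_exp_pos fun r => ∑ b, lam r (ss b) a b)
    (fun ss => le_ciSup (Finite.bddAbove_range
      fun ss : Fin B → S => ∑ a, q a * ⨆ r, exp (∑ b, lam r (ss b) a b)) ss)
  linarith

/-- For every `ρ ∈ V(P)`, input distribution `ρ(a)`, and arbitrary real
coefficients `λ(r,s,a,b)`, the mutual information of the channel
`ρ(𝐬|a) = Σ_r ρ(r,𝐬|a)` is bounded from below by
`Σ_{r,s,a,b} P(r,s|a,b) ρ(a) λ(r,s,a,b) + K_λ`, where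
`K_λ = −log max_𝐬 Σ_a ρ(a) max_r exp(Σ_b λ(r,s_b,a,b))`. -/
theorem stmt6 {R S : Type*} [Fintype R] [Fintype S] [DecidableEq S]
    [Nonempty R] [Nonempty S] {A B : ℕ}
    (P : R → S → Fin A → Fin B → ℝ) (hP : IsNSBox P)
    (ρ : R → (Fin B → S) → Fin A → ℝ) (hρ : MemV P ρ)
    (q : Fin A → ℝ) (hq : IsDist q)
    (lam : R → S → Fin A → Fin B → ℝ) :
    (∑ r, ∑ s, ∑ a, ∑ b, P r s a b * q a * lam r s a b)
      + (-Real.log (⨆ ss : Fin B → S,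
          ∑ a, q a * ⨆ r, Real.exp (∑ b, lam r (ss b) a b)))
    ≤ mutInfo (fun ss a => ∑ r, ρ r ss a) q :=
  stmt6_general P ρ hρ q hq lam
end

section
/- Let ρ(a) be a probability distribution on {1,…,A} and λ(r,s,a,b) real coefficients such that the dual constraint is violated at some 𝐬'∈𝓢^B, i.e. Σ_a ρ(a) max_r exp(Σ_b λ(r,s'_b,a,b)) > 1. Then the infimum, over all nonnegative (not necessarily normalized) functions ρ(r,𝐬|a), of L₂ := −Σ_{r,𝐬,a} ρ(r,𝐬|a)ρ(a) log[ (ρ(𝐬)/ρ(𝐬|a)) · exp(Σ_b λ(r,s_b,a,b)) ] is −∞, where ρ(𝐬|a) = Σ_r ρ(r,𝐬|a) and ρ(𝐬) = Σ_a ρ(𝐬|a)ρ(a) (terms with ρ(r,𝐬|a)ρ(a) = 0 contribute 0). -/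
open scoped BigOperators

/-- If the dual constraint is violated at some sequence `𝐬'`, i.e.
`Σ_a ρ(a) max_r exp(Σ_b λ(r,s'_b,a,b)) > 1`, then the infimum of
`L₂ = −Σ_{r,𝐬,a} ρ(r,𝐬|a) ρ(a) log[(ρ(𝐬)/ρ(𝐬|a)) exp(Σ_b λ(r,s_b,a,b))]`
over all nonnegative (not necessarily normalized) `ρ(r,𝐬|a)` is `−∞`:
for every `M` there is a nonnegative `ρ` with `L₂ < M`. -/
theorem stmt7 {R S : Type*} [Fintype R] [Fintype S] [Nonempty R] {A B : ℕ}
    (q : Fin A → ℝ) (hq : IsDist q)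
    (lam : R → S → Fin A → Fin B → ℝ)
    (ss' : Fin B → S)
    (hviol : 1 < ∑ a, q a * ⨆ r, Real.exp (∑ b, lam r (ss' b) a b)) :
    ∀ M : ℝ, ∃ ρ : R → (Fin B → S) → Fin A → ℝ,
      (∀ r ss a, 0 ≤ ρ r ss a) ∧
      -∑ r, ∑ ss : Fin B → S, ∑ a, ρ r ss a * q a *
          Real.log ((∑ a', (∑ r', ρ r' ss a') * q a') / (∑ r', ρ r' ss a) *
            Real.exp (∑ b, lam r (ss b) a b)) < M := by
  classical
  have hex : ∀ a : Fin A, ∃ r0 : R,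
      Real.exp (∑ b, lam r0 (ss' b) a b) = ⨆ r, Real.exp (∑ b, lam r (ss' b) a b) := by
    intro a
    exact exists_eq_ciSup_of_finite
  choose f hf using hex
  set x : Fin A → ℝ := fun a => ∑ b, lam (f a) (ss' b) a b with hx
  set E : ℝ := ∑ a, q a * Real.exp (x a) with hE
  have hE1 : 1 < E := by
    rw [hE]
    have : ∀ a : Fin A, q a * Real.exp (x a) = q a * ⨆ r, Real.exp (∑ b, lam r (ss' b) a b) := by
      intro a; rw [hx]; rw [hf a]
    rw [Finset.sum_congr rfl fun a _ => this a]
    exact hviol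
  have hEpos : (0:ℝ) < E := lt_trans one_pos hE1
  have hlog : 0 < Real.log E := Real.log_pos hE1
  intro M
  set t : ℝ := (|M| + 1) / (E * Real.log E) with ht
  have htpos : 0 < t := div_pos (by positivity) (mul_pos hEpos hlog)
  refine ⟨fun r ss a => if ss = ss' ∧ r = f a then t * Real.exp (x a) else 0, ?_, ?_⟩
  · intro r ss a
    dsimp only
    split
    · positivity
    · exact le_rfl
  · dsimp only
    have hS1 : ∀ (ss : Fin B → S) (a : Fin A),
        (∑ r' : R, if ss = ss' ∧ r' = f a then t * Real.exp (x a) else 0)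
          = if ss = ss' then t * Real.exp (x a) else 0 := by
      intro ss a
      by_cases h : ss = ss'
      · simp [h]
      · simp [h]
    have hS2 : ∀ ss : Fin B → S,
        (∑ a', (∑ r' : R, if ss = ss' ∧ r' = f a' then t * Real.exp (x a') else 0) * q a')
          = if ss = ss' then t * E else 0 := by
      intro ss
      rw [Finset.sum_congr rfl fun a' _ => by rw [hS1 ss a']]
      by_cases h : ss = ss'
      · simp only [h, if_true]
        rw [hE, Finset.mul_sum]
        exact Finset.sum_congr rfl fun a _ => by ring
      · simp [h]
    have harg : ∀ a : Fin A, t * E / (t * Real.exp (x a)) * Real.exp (x a) = E := by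
      intro a
      rw [mul_div_mul_left _ _ (ne_of_gt htpos), div_mul_cancel₀ _ (Real.exp_ne_zero _)]
    have key : (∑ r, ∑ ss : Fin B → S, ∑ a,
        (if ss = ss' ∧ r = f a then t * Real.exp (x a) else 0) * q a *
          Real.log ((∑ a', (∑ r', if ss = ss' ∧ r' = f a' then t * Real.exp (x a') else 0) * q a')
            / (∑ r', if ss = ss' ∧ r' = f a then t * Real.exp (x a) else 0) *
            Real.exp (∑ b, lam r (ss b) a b))) = t * E * Real.log E := by
      rw [Finset.sum_comm]
      rw [Fintype.sum_eq_single ss' (f := fun ss => ∑ r, ∑ a,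
        (if ss = ss' ∧ r = f a then t * Real.exp (x a) else 0) * q a *
          Real.log ((∑ a', (∑ r', if ss = ss' ∧ r' = f a' then t * Real.exp (x a') else 0) * q a')
            / (∑ r', if ss = ss' ∧ r' = f a then t * Real.exp (x a) else 0) *
            Real.exp (∑ b, lam r (ss b) a b)))]
      · rw [Finset.sum_comm]
        have step : ∀ a : Fin A, (∑ r : R,
            (if ss' = ss' ∧ r = f a then t * Real.exp (x a) else 0) * q a *
              Real.log ((∑ a', (∑ r', if ss' = ss' ∧ r' = f a' then t * Real.exp (x a') else 0) * q a')
                / (∑ r', if ss' = ss' ∧ r' = f a then t * Real.exp (x a) else 0) *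
                Real.exp (∑ b, lam r (ss' b) a b)))
            = t * Real.exp (x a) * q a * Real.log E := by
          intro a
          rw [hS2 ss', hS1 ss', if_pos rfl, if_pos rfl]
          rw [Fintype.sum_eq_single (f a) (f := fun r =>
            (if ss' = ss' ∧ r = f a then t * Real.exp (x a) else 0) * q a *
              Real.log (t * E / (t * Real.exp (x a)) * Real.exp (∑ b, lam r (ss' b) a b)))]
          · rw [if_pos ⟨rfl, rfl⟩]
            rw [show (∑ b, lam (f a) (ss' b) a b) = x a from rfl, harg a]
          · intro r hr
            rw [if_neg (by tauto)]
            ring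
        rw [Finset.sum_congr rfl fun a _ => step a]
        rw [hE, Finset.mul_sum, Finset.sum_mul]
        exact Finset.sum_congr rfl fun a _ => by ring
      · intro ss hss
        apply Finset.sum_eq_zero
        intro r _
        apply Finset.sum_eq_zero
        intro a _
        rw [if_neg (by tauto)]
        ring
    rw [key]
    have htE : t * E * Real.log E = |M| + 1 := by
      rw [mul_assoc, ht, div_mul_cancel₀ _ (ne_of_gt (mul_pos hEpos hlog))]
    rw [htE]
    have := neg_abs_le M
    linarith
end

section
/- Let {P_x(r,s|a,b)}_{x∈X} be a family of nonsignaling boxes with V(P_x) nonempty for all x, and D(P_x) = sup over distributions ρ(a) of inf over ρ(r,𝐬|a)∈V(P_x) of I(A;𝐒). Suppose x* maximizes D(P_x) over X, and suppose λ*(r,s,a,b) and a probability distribution ρ*(a) satisfy the dual constraint Σ_a ρ*(a) max_r exp(Σ_b λ*(r,s_b,a,b)) ≤ 1 for all 𝐬, together with Σ_{r,s,a,b} P_{x*}(r,s|a,b)ρ*(a)λ*(r,s,a,b) = D(P_{x*}). Then x* also maximizes the Bell expression: Σ_{r,s,a,b} P_x(r,s|a,b)ρ*(a)λ*(r,s,a,b)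 ≤ Σ_{r,s,a,b} P_{x*}(r,s|a,b)ρ*(a)λ*(r,s,a,b) for every x∈X. -/
open scoped BigOperators

/-- `D(P) = sup_{ρ(a)} inf_{ρ(r,𝐬|a) ∈ V(P)} I(A;𝐒)`. -/
noncomputable def DP {R S : Type*} [Fintype R] [Fintype S] [DecidableEq S]
    {A B : ℕ} (P : R → S → Fin A → Fin B → ℝ) : ℝ :=
  sSup { d : ℝ | ∃ q : Fin A → ℝ, IsDist q ∧
    d = sInf { x : ℝ | ∃ ρ, MemV P ρ ∧
          x = mutInfo (fun ss a => ∑ r, ρ r ss a) q } }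
section aux
variable {R S : Type*} [Fintype R] [Fintype S] [DecidableEq S] [Nonempty R] {A B : ℕ}

private lemma weak_duality
    (P : R → S → Fin A → Fin B → ℝ) (ρ : R → (Fin B → S) → Fin A → ℝ)
    (hρ : MemV P ρ) (q : Fin A → ℝ) (hq : IsDist q)
    (lam : R → S → Fin A → Fin B → ℝ)
    (hfeas : ∀ ss : Fin B → S, ∑ a, q a * ⨆ r, Real.exp (∑ b, lam r (ss b) a b) ≤ 1) :
    ∑ r, ∑ s, ∑ a, ∑ b, P r s a b * q a * lam r s a b
      ≤ mutInfo (fun ss a => ∑ r, ρ r ss a) q := by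
  obtain ⟨hρ0, hρ1, hρ2⟩ := hρ
  set Λ : R → (Fin B → S) → Fin A → ℝ := fun r ss a => ∑ b, lam r (ss b) a b with hΛ
  set E : (Fin B → S) → Fin A → ℝ := fun ss a => ⨆ r, Real.exp (Λ r ss a) with hE
  set W : (Fin B → S) → Fin A → ℝ := fun ss a => ∑ r, ρ r ss a with hW
  set Z : (Fin B → S) → ℝ := fun ss => ∑ a, W ss a * q a with hZ
  have hWnn : ∀ ss a, 0 ≤ W ss a := fun ss a => Finset.sum_nonneg fun r _ => hρ0 r ss a
  have hZnn : ∀ ss, 0 ≤ Z ss := fun ss =>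
    Finset.sum_nonneg fun a _ => mul_nonneg (hWnn ss a) (hq.1 a)
  have hZge : ∀ ss a, W ss a * q a ≤ Z ss := fun ss a =>
    Finset.single_le_sum (f := fun a' => W ss a' * q a')
      (fun a' _ => mul_nonneg (hWnn ss a') (hq.1 a')) (Finset.mem_univ a)
  have hEge : ∀ ss a r, Real.exp (Λ r ss a) ≤ E ss a := fun ss a r =>
    le_ciSup (f := fun r => Real.exp (Λ r ss a)) (Set.Finite.bddAbove (Set.finite_range _)) r
  have hEpos : ∀ ss a, 0 < E ss a := fun ss a =>
    lt_of_lt_of_le (Real.exp_pos _) (hEge ss a (Classical.arbitrary R))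
  have hΛle : ∀ ss a r, Λ r ss a ≤ Real.log (E ss a) := fun ss a r =>
    (Real.le_log_iff_exp_le (hEpos ss a)).mpr (hEge ss a r)
  -- step 1 : rewrite the Bell value
  have key : ∀ r a b, ∑ s, P r s a b * q a * lam r s a b
      = ∑ ss : Fin B → S, ρ r ss a * q a * lam r (ss b) a b := by
    intro r a b
    simp only [← hρ2 a b r, Finset.sum_mul, ite_mul, zero_mul]
    rw [Finset.sum_comm]
    refine Finset.sum_congr rfl fun ss _ => ?_
    simp [Finset.sum_ite_eq]
  have step1 : ∑ r, ∑ s, ∑ a, ∑ b, P r s a b * q a * lam r s a b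
      = ∑ ss : Fin B → S, ∑ a, ∑ r, ρ r ss a * q a * Λ r ss a := by
    calc ∑ r, ∑ s, ∑ a, ∑ b, P r s a b * q a * lam r s a b
        = ∑ r, ∑ a, ∑ b, ∑ s, P r s a b * q a * lam r s a b := by
          refine Finset.sum_congr rfl fun r _ => ?_
          rw [Finset.sum_comm]
          exact Finset.sum_congr rfl fun a _ => Finset.sum_comm
      _ = ∑ r, ∑ a, ∑ b, ∑ ss : Fin B → S, ρ r ss a * q a * lam r (ss b) a b := by
          simp only [key]
      _ = ∑ r, ∑ a, ∑ ss : Fin B → S, ρ r ss a * q a * Λ r ss a := by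
          refine Finset.sum_congr rfl fun r _ => Finset.sum_congr rfl fun a _ => ?_
          rw [Finset.sum_comm]
          exact Finset.sum_congr rfl fun ss _ => by rw [hΛ, Finset.mul_sum]
      _ = ∑ r, ∑ ss : Fin B → S, ∑ a, ρ r ss a * q a * Λ r ss a :=
          Finset.sum_congr rfl fun r _ => Finset.sum_comm
      _ = ∑ ss : Fin B → S, ∑ r, ∑ a, ρ r ss a * q a * Λ r ss a := Finset.sum_comm
      _ = ∑ ss : Fin B → S, ∑ a, ∑ r, ρ r ss a * q a * Λ r ss a :=
          Finset.sum_congr rfl fun ss _ => Finset.sum_comm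
  -- step 2
  have step2 : ∀ ss a, ∑ r, ρ r ss a * q a * Λ r ss a ≤ W ss a * q a * Real.log (E ss a) := by
    intro ss a
    have : ∀ r, ρ r ss a * q a * Λ r ss a ≤ ρ r ss a * q a * Real.log (E ss a) := fun r =>
      mul_le_mul_of_nonneg_left (hΛle ss a r) (mul_nonneg (hρ0 r ss a) (hq.1 a))
    calc ∑ r, ρ r ss a * q a * Λ r ss a ≤ ∑ r, ρ r ss a * q a * Real.log (E ss a) :=
          Finset.sum_le_sum fun r _ => this r
      _ = W ss a * q a * Real.log (E ss a) := by
          rw [hW]; rw [Finset.sum_mul, Finset.sum_mul]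
  -- step 3
  have step3 : ∀ ss a, W ss a * q a * Real.log (E ss a)
      ≤ W ss a * q a * Real.log (W ss a / Z ss) + (q a * E ss a * Z ss - q a * W ss a) := by
    intro ss a
    rcases eq_or_lt_of_le (hq.1 a) with hqa | hqa
    · simp [← hqa]
    rcases eq_or_lt_of_le (hWnn ss a) with hWa | hWa
    · have : 0 ≤ q a * E ss a * Z ss :=
        mul_nonneg (mul_nonneg (hq.1 a) (hEpos ss a).le) (hZnn ss)
      simp [← hWa]
      linarith
    · have hZpos : 0 < Z ss := lt_of_lt_of_le (mul_pos hWa hqa) (hZge ss a)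
      have hlog : Real.log (E ss a) - Real.log (W ss a / Z ss)
          = Real.log (E ss a * Z ss / W ss a) := by
        rw [Real.log_div (ne_of_gt (mul_pos (hEpos ss a) hZpos)) (ne_of_gt hWa),
            Real.log_mul (ne_of_gt (hEpos ss a)) (ne_of_gt hZpos),
            Real.log_div (ne_of_gt hWa) (ne_of_gt hZpos)]
        ring
      have hle : Real.log (E ss a * Z ss / W ss a) ≤ E ss a * Z ss / W ss a - 1 :=
        Real.log_le_sub_one_of_pos (div_pos (mul_pos (hEpos ss a) hZpos) hWa)
      have h2 : W ss a * q a * (E ss a * Z ss / W ss a - 1)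
          = q a * E ss a * Z ss - q a * W ss a := by
        have hW0 : W ss a ≠ 0 := ne_of_gt hWa
        field_simp
      have h3 : W ss a * q a * (Real.log (E ss a) - Real.log (W ss a / Z ss))
          ≤ q a * E ss a * Z ss - q a * W ss a := by
        rw [hlog, ← h2]
        exact mul_le_mul_of_nonneg_left hle (mul_nonneg (hWnn ss a) (hq.1 a))
      nlinarith [h3]
  -- step 4
  have step4 : ∀ ss, ∑ a, (q a * E ss a * Z ss - q a * W ss a) ≤ 0 := by
    intro ss
    have h1 : ∑ a, q a * E ss a * Z ss = (∑ a, q a * E ss a) * Z ss := by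
      rw [Finset.sum_mul]
    have h2 : ∑ a, q a * W ss a = Z ss := by
      rw [hZ]; exact Finset.sum_congr rfl fun a _ => mul_comm _ _
    rw [Finset.sum_sub_distrib, h1, h2]
    have := hfeas ss
    nlinarith [hZnn ss, this]
  -- combine
  rw [step1]
  have : mutInfo (fun ss a => ∑ r, ρ r ss a) q
      = ∑ ss : Fin B → S, ∑ a, W ss a * q a * Real.log (W ss a / Z ss) := rfl
  rw [this]
  calc ∑ ss : Fin B → S, ∑ a, ∑ r, ρ r ss a * q a * Λ r ss a
      ≤ ∑ ss : Fin B → S, ∑ a, (W ss a * q a * Real.log (W ss a / Z ss)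
          + (q a * E ss a * Z ss - q a * W ss a)) :=
        Finset.sum_le_sum fun ss _ => Finset.sum_le_sum fun a _ =>
          le_trans (step2 ss a) (step3 ss a)
    _ ≤ ∑ ss : Fin B → S, ∑ a, W ss a * q a * Real.log (W ss a / Z ss) := by
        refine Finset.sum_le_sum fun ss _ => ?_
        rw [Finset.sum_add_distrib]
        nlinarith [step4 ss]


private lemma mutInfo_le
    (P : R → S → Fin A → Fin B → ℝ) (ρ : R → (Fin B → S) → Fin A → ℝ)
    (hρ : MemV P ρ) (q : Fin A → ℝ) (hq : IsDist q) :
    mutInfo (fun ss a => ∑ r, ρ r ss a) q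
      ≤ (Fintype.card (Fin B → S) : ℝ) * Fintype.card (Fin A) := by
  obtain ⟨hρ0, hρ1, hρ2⟩ := hρ
  set W : (Fin B → S) → Fin A → ℝ := fun ss a => ∑ r, ρ r ss a with hW
  set Z : (Fin B → S) → ℝ := fun ss => ∑ a, W ss a * q a with hZ
  have hWnn : ∀ ss a, 0 ≤ W ss a := fun ss a => Finset.sum_nonneg fun r _ => hρ0 r ss a
  have hZge : ∀ ss a, W ss a * q a ≤ Z ss := fun ss a =>
    Finset.single_le_sum (f := fun a' => W ss a' * q a')
      (fun a' _ => mul_nonneg (hWnn ss a') (hq.1 a')) (Finset.mem_univ a)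
  have hW1 : ∀ ss a, W ss a ≤ 1 := by
    intro ss a
    calc W ss a = ∑ r, ρ r ss a := rfl
      _ ≤ ∑ r, ∑ ss' : Fin B → S, ρ r ss' a :=
          Finset.sum_le_sum fun r _ =>
            Finset.single_le_sum (fun ss' _ => hρ0 r ss' a) (Finset.mem_univ ss)
      _ = 1 := hρ1 a
  have hterm : ∀ ss a, W ss a * q a * Real.log (W ss a / Z ss) ≤ 1 := by
    intro ss a
    rcases eq_or_lt_of_le (mul_nonneg (hWnn ss a) (hq.1 a)) with h | h
    · rw [← h]; simp
    · have hZpos : 0 < Z ss := lt_of_lt_of_le h (hZge ss a)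
      have hWpos : 0 < W ss a := by nlinarith [hWnn ss a, hq.1 a]
      have hdivle : W ss a / Z ss ≤ 1 / (W ss a * q a) := by
        rw [div_le_div_iff₀ hZpos h]
        nlinarith [hW1 ss a, hZge ss a, hq.1 a, hWnn ss a]
      have hlog1 : Real.log (W ss a / Z ss) ≤ Real.log (1 / (W ss a * q a)) := by
        gcongr
      have hlog2 : Real.log (1 / (W ss a * q a)) ≤ 1 / (W ss a * q a) - 1 :=
        Real.log_le_sub_one_of_pos (by positivity)
      calc W ss a * q a * Real.log (W ss a / Z ss)
          ≤ W ss a * q a * (1 / (W ss a * q a) - 1) :=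
            mul_le_mul_of_nonneg_left (le_trans hlog1 hlog2) h.le
        _ ≤ 1 := by
            rw [mul_sub, mul_one_div, div_self (ne_of_gt h)]
            nlinarith [h]
  calc mutInfo (fun ss a => ∑ r, ρ r ss a) q
      = ∑ ss : Fin B → S, ∑ a, W ss a * q a * Real.log (W ss a / Z ss) := rfl
    _ ≤ ∑ _ss : Fin B → S, ∑ _a : Fin A, (1 : ℝ) :=
        Finset.sum_le_sum fun ss _ => Finset.sum_le_sum fun a _ => hterm ss a
    _ = (Fintype.card (Fin B → S) : ℝ) * Fintype.card (Fin A) := by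
        simp [Finset.card_univ, mul_comm]

end aux

/-- If `x*` maximizes the nonlocal capacity `D(P_x)` over a family of
nonsignaling boxes, and `(λ*, ρ*)` is a dual-feasible point attaining
`D(P_{x*})`, then `x*` also maximizes the associated Bell expression. -/
theorem stmt12 {R S : Type*} [Fintype R] [Fintype S] [DecidableEq S]
    [Nonempty R] [Nonempty S] {A B : ℕ} {X : Type*}
    (P : X → R → S → Fin A → Fin B → ℝ)
    (hP : ∀ x, IsNSBox (P x)) (hne : ∀ x, ∃ ρ, MemV (P x) ρ)
    (xstar : X) (hxstar : ∀ x, DP (P x) ≤ DP (P xstar))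
    (lam : R → S → Fin A → Fin B → ℝ)
    (qstar : Fin A → ℝ) (hq : IsDist qstar)
    (hfeas : ∀ ss : Fin B → S,
      ∑ a, qstar a * ⨆ r, Real.exp (∑ b, lam r (ss b) a b) ≤ 1)
    (hopt : ∑ r, ∑ s, ∑ a, ∑ b, P xstar r s a b * qstar a * lam r s a b
        = DP (P xstar)) :
    ∀ x, ∑ r, ∑ s, ∑ a, ∑ b, P x r s a b * qstar a * lam r s a b
      ≤ ∑ r, ∑ s, ∑ a, ∑ b, P xstar r s a b * qstar a * lam r s a b := by
  intro x
  rw [hopt]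
  refine le_trans ?_ (hxstar x)
  obtain ⟨ρ₀, hρ₀⟩ := hne x
  -- every element of the inner infimum set is nonnegative (take `λ = 0`)
  have hnonneg : ∀ q : Fin A → ℝ, IsDist q →
      ∀ v ∈ { v : ℝ | ∃ ρ, MemV (P x) ρ ∧
          v = mutInfo (fun ss a => ∑ r, ρ r ss a) q }, 0 ≤ v := by
    rintro q hq' v ⟨ρ, hρ, rfl⟩
    have hfeas0 : ∀ ss : Fin B → S,
        ∑ a, q a * ⨆ _r : R, Real.exp (∑ _b : Fin B, (0:ℝ)) ≤ 1 := by
      intro ss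
      simp only [Finset.sum_const_zero, Real.exp_zero, ciSup_const, mul_one]
      exact le_of_eq hq'.2
    have := weak_duality (P x) ρ hρ q hq' (fun _ _ _ _ => 0) hfeas0
    simpa using this
  -- the Bell value is below the inner infimum at `qstar`
  have h1 : ∑ r, ∑ s, ∑ a, ∑ b, P x r s a b * qstar a * lam r s a b
      ≤ sInf { v : ℝ | ∃ ρ, MemV (P x) ρ ∧
          v = mutInfo (fun ss a => ∑ r, ρ r ss a) qstar } := by
    refine le_csInf ⟨_, ρ₀, hρ₀, rfl⟩ ?_
    rintro v ⟨ρ, hρ, rfl⟩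
    exact weak_duality (P x) ρ hρ qstar hq lam hfeas
  refine le_trans h1 ?_
  -- the infimum at `qstar` is below the supremum `DP (P x)`
  have hbdd : BddAbove { d : ℝ | ∃ q : Fin A → ℝ, IsDist q ∧
      d = sInf { v : ℝ | ∃ ρ, MemV (P x) ρ ∧
          v = mutInfo (fun ss a => ∑ r, ρ r ss a) q } } := by
    refine ⟨(Fintype.card (Fin B → S) : ℝ) * Fintype.card (Fin A), ?_⟩
    rintro d ⟨q, hq', rfl⟩
    refine le_trans (csInf_le ⟨0, fun v hv => hnonneg q hq' v hv⟩ ⟨ρ₀, hρ₀, rfl⟩) ?_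
    exact mutInfo_le (P x) ρ₀ hρ₀ q hq'
  exact le_csSup hbdd ⟨qstar, hq, rfl⟩
end

section
/- Monotonicity of the setup-optimization iteration: let {P_x(r,s|a,b)}_{x∈X} be a family of nonsignaling boxes with V(P_x) nonempty for all x, and D(P_x) = sup over distributions ρ(a) of inf over ρ(r,𝐬|a)∈V(P_x) of I(A;𝐒). Suppose λ_n(r,s,a,b) and a probability distribution ρ_n(a) satisfy the dual constraint Σ_a ρ_n(a) max_r exp(Σ_b λ_n(r,s_b,a,b)) ≤ 1 for all 𝐬, together with Σ_{r,s,a,b} P_{x_n}(r,s|a,b)ρ_n(a)λ_n(r,s,a,b) = D(P_{x_n}), and let x_{n+1} maximize Σ_{r,s,a,b} P_x(r,s|a,b)ρ_n(a)λ_n(r,s,a,b) over x∈X. Then D(P_{x_{n+1}}) ≥ D(P_{x_n}). -/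
open scoped BigOperators

lemma gibbs_pt {u v : ℝ} (hu : 0 ≤ u) (hv : 0 ≤ v) (h : 0 < u → 0 < v) :
    u - v ≤ u * Real.log (u / v) := by
  rcases eq_or_lt_of_le hu with h0 | h0
  · rw [← h0]; simpa using hv
  · have hv' := h h0
    have hlog : Real.log (v / u) ≤ v / u - 1 :=
      Real.log_le_sub_one_of_pos (by positivity)
    have h2 : Real.log (u / v) = - Real.log (v / u) := by
      rw [← Real.log_inv, inv_div]
    have h3 : u * (v / u) = v := by field_simp
    rw [h2]
    nlinarith [mul_le_mul_of_nonneg_left hlog hu]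

lemma gibbs {ι : Type*} [Fintype ι] (u v : ι → ℝ) (hu : ∀ i, 0 ≤ u i)
    (hv : ∀ i, 0 ≤ v i) (h : ∀ i, 0 < u i → 0 < v i)
    (hsum : ∑ i, v i ≤ ∑ i, u i) :
    0 ≤ ∑ i, u i * Real.log (u i / v i) := by
  have key : ∑ i, (u i - v i) ≤ ∑ i, u i * Real.log (u i / v i) :=
    Finset.sum_le_sum fun i _ => gibbs_pt (hu i) (hv i) (h i)
  rw [Finset.sum_sub_distrib] at key
  linarith

lemma mutInfo_nonneg {X Y : Type*} [Fintype X] [Fintype Y]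
    (W : Y → X → ℝ) (q : X → ℝ) (hW : ∀ y x, 0 ≤ W y x)
    (hWsum : ∀ x, ∑ y, W y x = 1) (hq : IsDist q) :
    0 ≤ mutInfo W q := by
  set p : Y → ℝ := fun y => ∑ x', W y x' * q x' with hp
  have hpnn : ∀ y, 0 ≤ p y := fun y =>
    Finset.sum_nonneg fun x _ => mul_nonneg (hW y x) (hq.1 x)
  have key : mutInfo W q = ∑ z : Y × X,
      (W z.1 z.2 * q z.2) * Real.log ((W z.1 z.2 * q z.2) / (p z.1 * q z.2)) := by
    rw [mutInfo, Fintype.sum_prod_type]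
    refine Finset.sum_congr rfl fun y _ => Finset.sum_congr rfl fun x _ => ?_
    rcases eq_or_lt_of_le (hq.1 x) with h0 | h0
    · rw [← h0]; simp
    · rw [mul_div_mul_right _ _ (ne_of_gt h0)]
  rw [key]
  apply gibbs
  · exact fun z => mul_nonneg (hW z.1 z.2) (hq.1 z.2)
  · exact fun z => mul_nonneg (hpnn z.1) (hq.1 z.2)
  · intro z hz
    have hq0 : 0 < q z.2 := by
      rcases (hq.1 z.2).lt_or_eq with h | h
      · exact h
      · exfalso; rw [← h, mul_zero] at hz; exact lt_irrefl 0 hz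
    have hW0 : 0 < W z.1 z.2 := by
      rcases (hW z.1 z.2).lt_or_eq with h | h
      · exact h
      · exfalso; rw [← h, zero_mul] at hz; exact lt_irrefl 0 hz
    have : W z.1 z.2 * q z.2 ≤ p z.1 :=
      Finset.single_le_sum (f := fun x' => W z.1 x' * q x')
        (fun x _ => mul_nonneg (hW z.1 x) (hq.1 x)) (Finset.mem_univ z.2)
    exact mul_pos (lt_of_lt_of_le hz this) hq0
  · rw [Fintype.sum_prod_type, Fintype.sum_prod_type]
    have e1 : ∑ y, ∑ x, W y x * q x = 1 := by
      rw [Finset.sum_comm]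
      calc ∑ x, ∑ y, W y x * q x = ∑ x, (∑ y, W y x) * q x := by
            simp [Finset.sum_mul]
        _ = 1 := by simp only [hWsum, one_mul]; exact hq.2
    have e2 : ∑ y, ∑ x, p y * q x = 1 := by
      calc ∑ y, ∑ x, p y * q x = ∑ y, p y * ∑ x, q x := by
            simp [Finset.mul_sum]
        _ = ∑ y, p y := by rw [hq.2]; simp
        _ = 1 := e1
    rw [e1, e2]

lemma mutInfo_le_log {X Y : Type*} [Fintype X] [Fintype Y] [Nonempty Y]
    (W : Y → X → ℝ) (q : X → ℝ) (hW : ∀ y x, 0 ≤ W y x)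
    (hWsum : ∀ x, ∑ y, W y x = 1) (hq : IsDist q) :
    mutInfo W q ≤ Real.log (Fintype.card Y) := by
  set p : Y → ℝ := fun y => ∑ x', W y x' * q x' with hp
  have hpnn : ∀ y, 0 ≤ p y := fun y =>
    Finset.sum_nonneg fun x _ => mul_nonneg (hW y x) (hq.1 x)
  have hpsum : ∑ y, p y = 1 := by
    rw [show ∑ y, p y = ∑ y, ∑ x, W y x * q x from rfl, Finset.sum_comm]
    calc ∑ x, ∑ y, W y x * q x = ∑ x, (∑ y, W y x) * q x := by
          simp [Finset.sum_mul]
      _ = 1 := by simp only [hWsum, one_mul]; exact hq.2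
  have step1 : mutInfo W q ≤ ∑ y, p y * (- Real.log (p y)) := by
    rw [mutInfo]
    have : ∀ y, ∑ x, W y x * q x * Real.log (W y x / p y)
        ≤ p y * (- Real.log (p y)) := by
      intro y
      have hterm : ∀ x, W y x * q x * Real.log (W y x / p y)
          ≤ W y x * q x * (- Real.log (p y)) := by
        intro x
        rcases eq_or_lt_of_le (mul_nonneg (hW y x) (hq.1 x)) with h0 | h0
        · rw [← h0]; simp
        · have hW0 : 0 < W y x := by
            rcases (hW y x).lt_or_eq with h | h
            · exact h
            · exfalso; rw [← h, zero_mul] at h0; exact lt_irrefl 0 h0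
          have hple : W y x * q x ≤ p y :=
            Finset.single_le_sum (f := fun x' => W y x' * q x')
              (fun x' _ => mul_nonneg (hW y x') (hq.1 x')) (Finset.mem_univ x)
          have hp0 : 0 < p y := lt_of_lt_of_le h0 hple
          have hWle1 : W y x ≤ 1 := by
            rw [← hWsum x]
            exact Finset.single_le_sum (f := fun y' => W y' x)
              (fun y' _ => hW y' x) (Finset.mem_univ y)
          have : Real.log (W y x / p y) = Real.log (W y x) - Real.log (p y) :=
            Real.log_div (ne_of_gt hW0) (ne_of_gt hp0)
          have hlogW : Real.log (W y x) ≤ 0 := Real.log_nonpos (le_of_lt hW0) hWle1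
          apply mul_le_mul_of_nonneg_left _ (le_of_lt h0)
          rw [this]; linarith
      calc ∑ x, W y x * q x * Real.log (W y x / p y)
          ≤ ∑ x, W y x * q x * (- Real.log (p y)) := Finset.sum_le_sum fun x _ => hterm x
        _ = p y * (- Real.log (p y)) := by rw [← Finset.sum_mul]
    exact Finset.sum_le_sum fun y _ => this y
  have hN : (0:ℝ) < Fintype.card Y := by
    exact_mod_cast Fintype.card_pos
  have step2 : ∑ y, p y * (- Real.log (p y)) ≤ Real.log (Fintype.card Y) := by
    have hg : 0 ≤ ∑ y, p y * Real.log (p y / ((Fintype.card Y : ℝ))⁻¹) := by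
      apply gibbs _ _ hpnn (fun y => by positivity) (fun y _ => by positivity)
      rw [hpsum, Finset.sum_const, nsmul_eq_mul, Finset.card_univ,
        mul_inv_cancel₀ (ne_of_gt hN)]
    have he : ∑ y, p y * Real.log (p y / ((Fintype.card Y : ℝ))⁻¹)
        = ∑ y, (p y * Real.log (p y) + p y * Real.log (Fintype.card Y)) := by
      refine Finset.sum_congr rfl fun y _ => ?_
      rcases eq_or_lt_of_le (hpnn y) with h0 | h0
      · rw [← h0]; simp
      · rw [div_inv_eq_mul, Real.log_mul (ne_of_gt h0) (ne_of_gt hN), mul_add]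
    rw [he, Finset.sum_add_distrib, ← Finset.sum_mul, hpsum, one_mul] at hg
    have : ∑ y, p y * (- Real.log (p y)) = - ∑ y, p y * Real.log (p y) := by
      rw [← Finset.sum_neg_distrib]
      exact Finset.sum_congr rfl fun y _ => by ring
    rw [this]; linarith
  linarith

lemma dual_bound {R S : Type*} [Fintype R] [Fintype S] [DecidableEq S]
    [Nonempty R] {A B : ℕ}
    (Pb : R → S → Fin A → Fin B → ℝ)
    (lam : R → S → Fin A → Fin B → ℝ)
    (qn : Fin A → ℝ) (hq : IsDist qn)
    (hfeas : ∀ ss : Fin B → S,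
      ∑ a, qn a * ⨆ r, Real.exp (∑ b, lam r (ss b) a b) ≤ 1)
    (ρ : R → (Fin B → S) → Fin A → ℝ) (hρ : MemV Pb ρ) :
    ∑ r, ∑ s, ∑ a, ∑ b, Pb r s a b * qn a * lam r s a b
      ≤ mutInfo (fun ss a => ∑ r, ρ r ss a) qn := by
  classical
  set W : (Fin B → S) → Fin A → ℝ := fun ss a => ∑ r, ρ r ss a with hWdef
  set p : (Fin B → S) → ℝ := fun ss => ∑ a, W ss a * qn a with hpdef
  set M : (Fin B → S) → Fin A → ℝ :=
    fun ss a => ⨆ r, Real.exp (∑ b, lam r (ss b) a b) with hMdef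
  have hρnn := hρ.1
  have hWnn : ∀ ss a, 0 ≤ W ss a := fun ss a =>
    Finset.sum_nonneg fun r _ => hρnn r ss a
  have hWsum : ∀ a, ∑ ss, W ss a = 1 := by
    intro a
    rw [show (∑ ss, W ss a) = ∑ ss : Fin B → S, ∑ r, ρ r ss a from rfl,
      Finset.sum_comm]
    exact hρ.2.1 a
  have hpnn : ∀ ss, 0 ≤ p ss := fun ss =>
    Finset.sum_nonneg fun a _ => mul_nonneg (hWnn ss a) (hq.1 a)
  have hpsum : ∑ ss, p ss = 1 := by
    rw [show (∑ ss, p ss) = ∑ ss : Fin B → S, ∑ a, W ss a * qn a from rfl,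
      Finset.sum_comm]
    calc ∑ a, ∑ ss, W ss a * qn a = ∑ a, (∑ ss, W ss a) * qn a := by
          simp [Finset.sum_mul]
      _ = 1 := by simp only [hWsum, one_mul]; exact hq.2
  have hMpos : ∀ ss a, 0 < M ss a := by
    intro ss a
    have := le_ciSup (f := fun r => Real.exp (∑ b, lam r (ss b) a b))
      (Set.finite_range _).bddAbove (Classical.arbitrary R)
    exact lt_of_lt_of_le (Real.exp_pos _) this
  -- Step A: reindex the Bell expression
  have stepA : (∑ r, ∑ s, ∑ a, ∑ b, Pb r s a b * qn a * lam r s a b)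
      = ∑ a, ∑ r, ∑ ss : Fin B → S, ρ r ss a * qn a * (∑ b, lam r (ss b) a b) := by
    have inner : ∀ r a b, (∑ s, Pb r s a b * qn a * lam r s a b)
        = ∑ ss : Fin B → S, ρ r ss a * qn a * lam r (ss b) a b := by
      intro r a b
      calc (∑ s, Pb r s a b * qn a * lam r s a b)
          = ∑ s, ∑ ss : Fin B → S,
              (if ss b = s then ρ r ss a * qn a * lam r s a b else 0) := by
            refine Finset.sum_congr rfl fun s _ => ?_
            rw [← hρ.2.2 a b r s, Finset.sum_mul, Finset.sum_mul]
            refine Finset.sum_congr rfl fun ss _ => ?_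
            split_ifs <;> simp
        _ = ∑ ss : Fin B → S, ∑ s,
              (if ss b = s then ρ r ss a * qn a * lam r s a b else 0) :=
            Finset.sum_comm
        _ = ∑ ss : Fin B → S, ρ r ss a * qn a * lam r (ss b) a b := by
            refine Finset.sum_congr rfl fun ss _ => ?_
            rw [Finset.sum_ite_eq]
            simp
    calc (∑ r, ∑ s, ∑ a, ∑ b, Pb r s a b * qn a * lam r s a b)
        = ∑ r, ∑ a, ∑ b, ∑ s, Pb r s a b * qn a * lam r s a b := by
          refine Finset.sum_congr rfl fun r _ => ?_
          rw [Finset.sum_comm]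
          exact Finset.sum_congr rfl fun a _ => Finset.sum_comm
      _ = ∑ r, ∑ a, ∑ b, ∑ ss : Fin B → S, ρ r ss a * qn a * lam r (ss b) a b := by
          refine Finset.sum_congr rfl fun r _ => Finset.sum_congr rfl fun a _ =>
            Finset.sum_congr rfl fun b _ => inner r a b
      _ = ∑ r, ∑ a, ∑ ss : Fin B → S, ∑ b, ρ r ss a * qn a * lam r (ss b) a b := by
          refine Finset.sum_congr rfl fun r _ => Finset.sum_congr rfl fun a _ =>
            Finset.sum_comm
      _ = ∑ r, ∑ a, ∑ ss : Fin B → S, ρ r ss a * qn a * (∑ b, lam r (ss b) a b) := by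
          refine Finset.sum_congr rfl fun r _ => Finset.sum_congr rfl fun a _ =>
            Finset.sum_congr rfl fun ss _ => ?_
          rw [Finset.mul_sum]
      _ = ∑ a, ∑ r, ∑ ss : Fin B → S, ρ r ss a * qn a * (∑ b, lam r (ss b) a b) :=
          Finset.sum_comm
  -- Step B: bound by log of the sup
  have stepB : (∑ a, ∑ r, ∑ ss : Fin B → S, ρ r ss a * qn a * (∑ b, lam r (ss b) a b))
      ≤ ∑ a, ∑ ss : Fin B → S, qn a * W ss a * Real.log (M ss a) := by
    have hb : ∀ a r (ss : Fin B → S),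
        ρ r ss a * qn a * (∑ b, lam r (ss b) a b)
          ≤ ρ r ss a * qn a * Real.log (M ss a) := by
      intro a r ss
      have hexp : Real.exp (∑ b, lam r (ss b) a b) ≤ M ss a :=
        le_ciSup (f := fun r => Real.exp (∑ b, lam r (ss b) a b))
          (Set.finite_range _).bddAbove r
      have hle : (∑ b, lam r (ss b) a b) ≤ Real.log (M ss a) := by
        rw [← Real.log_exp (∑ b, lam r (ss b) a b)]
        exact Real.log_le_log (Real.exp_pos _) hexp
      exact mul_le_mul_of_nonneg_left hle (mul_nonneg (hρnn r ss a) (hq.1 a))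
    calc (∑ a, ∑ r, ∑ ss : Fin B → S, ρ r ss a * qn a * (∑ b, lam r (ss b) a b))
        ≤ ∑ a, ∑ r, ∑ ss : Fin B → S, ρ r ss a * qn a * Real.log (M ss a) := by
          refine Finset.sum_le_sum fun a _ => Finset.sum_le_sum fun r _ =>
            Finset.sum_le_sum fun ss _ => hb a r ss
      _ = ∑ a, ∑ ss : Fin B → S, qn a * W ss a * Real.log (M ss a) := by
          refine Finset.sum_congr rfl fun a _ => ?_
          rw [Finset.sum_comm]
          refine Finset.sum_congr rfl fun ss _ => ?_
          rw [show (qn a * W ss a * Real.log (M ss a))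
            = (∑ r, ρ r ss a) * (qn a * Real.log (M ss a)) by rw [hWdef]; ring,
            Finset.sum_mul]
          exact Finset.sum_congr rfl fun r _ => by ring
  -- Step C: the T term is at most the mutual information
  have stepC : (∑ a, ∑ ss : Fin B → S, qn a * W ss a * Real.log (M ss a))
      ≤ mutInfo W qn := by
    set u : ((Fin B → S) × Fin A) → ℝ := fun z => W z.1 z.2 * qn z.2 with hu
    set v : ((Fin B → S) × Fin A) → ℝ :=
      fun z => qn z.2 * (p z.1 * M z.1 z.2) with hv
    have key : mutInfo W qn
        = (∑ a, ∑ ss : Fin B → S, qn a * W ss a * Real.log (M ss a))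
          + ∑ z : (Fin B → S) × Fin A, u z * Real.log (u z / v z) := by
      rw [mutInfo, show (∑ a, ∑ ss : Fin B → S, qn a * W ss a * Real.log (M ss a))
        = ∑ ss : Fin B → S, ∑ a, qn a * W ss a * Real.log (M ss a) from Finset.sum_comm,
        Fintype.sum_prod_type, ← Finset.sum_add_distrib]
      refine Finset.sum_congr rfl fun ss _ => ?_
      rw [← Finset.sum_add_distrib]
      refine Finset.sum_congr rfl fun a _ => ?_
      rcases eq_or_lt_of_le (mul_nonneg (hWnn ss a) (hq.1 a)) with h0 | h0
      · have h0' : W ss a * qn a = 0 := h0.symm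
        have h0'' : qn a * W ss a = 0 := by rw [mul_comm]; exact h0'
        simp [hu, hv, h0', h0'']
      · have hq0 : 0 < qn a := by
          rcases (hq.1 a).lt_or_eq with h | h
          · exact h
          · exfalso; rw [← h, mul_zero] at h0; exact lt_irrefl 0 h0
        have hW0 : 0 < W ss a := by
          rcases (hWnn ss a).lt_or_eq with h | h
          · exact h
          · exfalso; rw [← h, zero_mul] at h0; exact lt_irrefl 0 h0
        have hp0 : 0 < p ss := lt_of_lt_of_le h0
          (Finset.single_le_sum (f := fun a' => W ss a' * qn a')
            (fun a' _ => mul_nonneg (hWnn ss a') (hq.1 a')) (Finset.mem_univ a))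
        have hM0 := hMpos ss a
        have hdiv : u (ss, a) / v (ss, a) = W ss a / (p ss * M ss a) := by
          show W ss a * qn a / (qn a * (p ss * M ss a)) = _
          rw [mul_comm (qn a) (p ss * M ss a),
            mul_div_mul_right _ _ (ne_of_gt hq0)]
        have hlog : Real.log (W ss a / (p ss * M ss a))
            = Real.log (W ss a / p ss) - Real.log (M ss a) := by
          rw [← div_div, Real.log_div (by positivity) (ne_of_gt hM0)]
        show W ss a * qn a * Real.log (W ss a / p ss)
          = qn a * W ss a * Real.log (M ss a) + u (ss, a) * Real.log (u (ss, a) / v (ss, a))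
        rw [hdiv, hlog]
        show W ss a * qn a * Real.log (W ss a / p ss)
          = qn a * W ss a * Real.log (M ss a)
            + W ss a * qn a * (Real.log (W ss a / p ss) - Real.log (M ss a))
        ring
    have hgib : 0 ≤ ∑ z : (Fin B → S) × Fin A, u z * Real.log (u z / v z) := by
      apply gibbs
      · exact fun z => mul_nonneg (hWnn z.1 z.2) (hq.1 z.2)
      · exact fun z => mul_nonneg (hq.1 z.2)
          (mul_nonneg (hpnn z.1) (le_of_lt (hMpos z.1 z.2)))
      · intro z hz
        have hq0 : 0 < qn z.2 := by
          rcases (hq.1 z.2).lt_or_eq with h | h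
          · exact h
          · exfalso
            have : u z = 0 := by show W z.1 z.2 * qn z.2 = 0; rw [← h, mul_zero]
            rw [this] at hz; exact lt_irrefl 0 hz
        have hp0 : 0 < p z.1 := lt_of_lt_of_le hz
          (Finset.single_le_sum (f := fun a' => W z.1 a' * qn a')
            (fun a' _ => mul_nonneg (hWnn z.1 a') (hq.1 a')) (Finset.mem_univ z.2))
        exact mul_pos hq0 (mul_pos hp0 (hMpos z.1 z.2))
      · have husum : ∑ z : (Fin B → S) × Fin A, u z = 1 := by
          rw [Fintype.sum_prod_type, Finset.sum_comm]
          calc ∑ a, ∑ ss : Fin B → S, W ss a * qn a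
              = ∑ a, (∑ ss, W ss a) * qn a := by simp [Finset.sum_mul]
            _ = 1 := by simp only [hWsum, one_mul]; exact hq.2
        rw [husum, Fintype.sum_prod_type]
        calc (∑ ss : Fin B → S, ∑ a, qn a * (p ss * M ss a))
            = ∑ ss : Fin B → S, p ss * ∑ a, qn a * M ss a := by
              refine Finset.sum_congr rfl fun ss _ => ?_
              rw [Finset.mul_sum]
              exact Finset.sum_congr rfl fun a _ => by ring
          _ ≤ ∑ ss : Fin B → S, p ss * 1 :=
              Finset.sum_le_sum fun ss _ =>
                mul_le_mul_of_nonneg_left (hfeas ss) (hpnn ss)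
          _ = 1 := by simp only [mul_one]; exact hpsum
    linarith [key, hgib]
  calc (∑ r, ∑ s, ∑ a, ∑ b, Pb r s a b * qn a * lam r s a b)
      = _ := stepA
    _ ≤ _ := stepB
    _ ≤ mutInfo W qn := stepC

/-- Monotonicity of the setup-optimization iteration: if `(λ_n, ρ_n)` is a
dual-feasible point attaining `D(P_{x_n})`, and `x_{n+1}` maximizes the
associated Bell expression over `X`, then `D(P_{x_{n+1}}) ≥ D(P_{x_n})`. -/
theorem stmt13 {R S : Type*} [Fintype R] [Fintype S] [DecidableEq S]
    [Nonempty R] [Nonempty S] {A B : ℕ} {X : Type*}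
    (P : X → R → S → Fin A → Fin B → ℝ)
    (hP : ∀ x, IsNSBox (P x)) (hne : ∀ x, ∃ ρ, MemV (P x) ρ)
    (xn : X)
    (lam : R → S → Fin A → Fin B → ℝ)
    (qn : Fin A → ℝ) (hq : IsDist qn)
    (hfeas : ∀ ss : Fin B → S,
      ∑ a, qn a * ⨆ r, Real.exp (∑ b, lam r (ss b) a b) ≤ 1)
    (hopt : ∑ r, ∑ s, ∑ a, ∑ b, P xn r s a b * qn a * lam r s a b
        = DP (P xn))
    (xn1 : X)
    (hmax : ∀ x, ∑ r, ∑ s, ∑ a, ∑ b, P x r s a b * qn a * lam r s a b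
        ≤ ∑ r, ∑ s, ∑ a, ∑ b, P xn1 r s a b * qn a * lam r s a b) :
    DP (P xn) ≤ DP (P xn1) := by
  classical
  have hBell : ∑ r, ∑ s, ∑ a, ∑ b, P xn r s a b * qn a * lam r s a b
      ≤ ∑ r, ∑ s, ∑ a, ∑ b, P xn1 r s a b * qn a * lam r s a b := hmax xn
  -- the Bell value of xn1 lower-bounds every mutual information in V(P xn1)
  have hlow : ∀ x : ℝ, x ∈ { x : ℝ | ∃ ρ, MemV (P xn1) ρ ∧
      x = mutInfo (fun ss a => ∑ r, ρ r ss a) qn } →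
      (∑ r, ∑ s, ∑ a, ∑ b, P xn1 r s a b * qn a * lam r s a b) ≤ x := by
    rintro x ⟨ρ, hρ, rfl⟩
    exact dual_bound (P xn1) lam qn hq hfeas ρ hρ
  obtain ⟨ρ1, hρ1⟩ := hne xn1
  have hSne : { x : ℝ | ∃ ρ, MemV (P xn1) ρ ∧
      x = mutInfo (fun ss a => ∑ r, ρ r ss a) qn }.Nonempty :=
    ⟨_, ρ1, hρ1, rfl⟩
  have h3 : (∑ r, ∑ s, ∑ a, ∑ b, P xn1 r s a b * qn a * lam r s a b)
      ≤ sInf { x : ℝ | ∃ ρ, MemV (P xn1) ρ ∧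
          x = mutInfo (fun ss a => ∑ r, ρ r ss a) qn } :=
    le_csInf hSne hlow
  -- properties of channels coming from MemV
  have hWprop : ∀ (ρ : R → (Fin B → S) → Fin A → ℝ), MemV (P xn1) ρ →
      (∀ ss a, 0 ≤ ∑ r, ρ r ss a) ∧
      (∀ a, ∑ ss : Fin B → S, ∑ r, ρ r ss a = 1) := by
    intro ρ hρ
    refine ⟨fun ss a => Finset.sum_nonneg fun r _ => hρ.1 r ss a, fun a => ?_⟩
    rw [Finset.sum_comm]
    exact hρ.2.1 a
  -- the DP set is bounded above
  have hbdd : BddAbove { d : ℝ | ∃ q : Fin A → ℝ, IsDist q ∧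
      d = sInf { x : ℝ | ∃ ρ, MemV (P xn1) ρ ∧
          x = mutInfo (fun ss a => ∑ r, ρ r ss a) q } } := by
    refine ⟨Real.log (Fintype.card (Fin B → S)), ?_⟩
    rintro d ⟨q', hq', rfl⟩
    have hbb : BddBelow { x : ℝ | ∃ ρ, MemV (P xn1) ρ ∧
        x = mutInfo (fun ss a => ∑ r, ρ r ss a) q' } := by
      refine ⟨0, ?_⟩
      rintro x ⟨ρ, hρ, rfl⟩
      exact mutInfo_nonneg _ q' (hWprop ρ hρ).1 (hWprop ρ hρ).2 hq'
    have hmem : mutInfo (fun ss a => ∑ r, ρ1 r ss a) q' ∈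
        { x : ℝ | ∃ ρ, MemV (P xn1) ρ ∧
          x = mutInfo (fun ss a => ∑ r, ρ r ss a) q' } := ⟨ρ1, hρ1, rfl⟩
    calc sInf { x : ℝ | ∃ ρ, MemV (P xn1) ρ ∧
          x = mutInfo (fun ss a => ∑ r, ρ r ss a) q' }
        ≤ mutInfo (fun ss a => ∑ r, ρ1 r ss a) q' := csInf_le hbb hmem
      _ ≤ Real.log (Fintype.card (Fin B → S)) :=
          mutInfo_le_log _ q' (hWprop ρ1 hρ1).1 (hWprop ρ1 hρ1).2 hq'
  have hmem : sInf { x : ℝ | ∃ ρ, MemV (P xn1) ρ ∧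
      x = mutInfo (fun ss a => ∑ r, ρ r ss a) qn } ∈
      { d : ℝ | ∃ q : Fin A → ℝ, IsDist q ∧
        d = sInf { x : ℝ | ∃ ρ, MemV (P xn1) ρ ∧
          x = mutInfo (fun ss a => ∑ r, ρ r ss a) q } } := ⟨qn, hq, rfl⟩
  have h4 : sInf { x : ℝ | ∃ ρ, MemV (P xn1) ρ ∧
      x = mutInfo (fun ss a => ∑ r, ρ r ss a) qn } ≤ DP (P xn1) :=
    le_csSup hbdd hmem
  rw [← hopt]
  linarith
end

section
/- Stationarity condition for optimal measurement bases: let H₁,…,H_n be Hermitian operators on ℂ^n, and suppose the orthonormal basis (α₁,…,α_n) of ℂ^n maximizes J = Σ_{r=1}^n ⟨α_r, H_r α_r⟩ over all orthonormal bases of ℂ^n. Then ⟨α_i, (H_i − H_j) α_j⟩ = 0 for all i, j. -/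
/-!
Rotating the pair `(α i, α j)` inside its span by an angle `t` with a phase `z` (`|z| = 1`) keeps
the basis orthonormal and changes `J` by `sin² t · A + sin 2t · Re (z c)`, where
`c = ⟨α i, (H i - H j) α j⟩` and `A` does not depend on `t`. As `J` is maximal at `t = 0`, the
derivative `2 Re (z c)` there vanishes, and `z = 1`, `z = I` give `c = 0`.
-/

open Matrix

lemma eq_zero_of_forall_sin_sq_mul_add_sin_two_mul_nonpos {A R : ℝ}
    (h : ∀ t, Real.sin t ^ 2 * A + Real.sin (2 * t) * R ≤ 0) : R = 0 := by
  have hmax : IsLocalMax (fun t => Real.sin t ^ 2 * A + Real.sin (2 * t) * R) 0 :=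
    Filter.Eventually.of_forall fun t => by simpa using h t
  have hderiv : HasDerivAt (fun t => Real.sin t ^ 2 * A + Real.sin (2 * t) * R) (2 * R) 0 :=
    ((((Real.hasDerivAt_sin 0).pow 2).mul_const A).add
      (((hasDerivAt_id (0 : ℝ)).const_mul 2).sin.mul_const R)).congr_deriv (by simp)
  linarith [hmax.hasDerivAt_eq_zero hderiv]

variable {ι m : Type*}

lemma Matrix.IsHermitian.star_dotProduct_mulVec_comm [Fintype m] {M : Matrix m m ℂ}
    (hM : M.IsHermitian) (u w : m → ℂ) : star w ⬝ᵥ M *ᵥ u = star (star u ⬝ᵥ M *ᵥ w) := by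
  rw [star_dotProduct, star_mulVec, ← dotProduct_mulVec, hM.eq]

lemma Matrix.IsHermitian.re_star_dotProduct_mulVec_smul_add_smul [Fintype m] {M : Matrix m m ℂ}
    (hM : M.IsHermitian) (x y : ℂ) (u w : m → ℂ) :
    (star (x • u + y • w) ⬝ᵥ M *ᵥ (x • u + y • w)).re =
      Complex.normSq x * (star u ⬝ᵥ M *ᵥ u).re + Complex.normSq y * (star w ⬝ᵥ M *ᵥ w).re
        + 2 * (star x * y * (star u ⬝ᵥ M *ᵥ w)).re := by
  simp only [star_add, star_smul, mulVec_add, mulVec_smul, add_dotProduct, dotProduct_add,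
    smul_dotProduct, dotProduct_smul, smul_eq_mul, hM.star_dotProduct_mulVec_comm w u]
  simp only [RCLike.star_def, Complex.add_re, Complex.mul_re, Complex.conj_re, Complex.conj_im,
    Complex.add_im, Complex.mul_im, neg_mul, mul_neg, sub_neg_eq_add, neg_neg, Complex.normSq_apply]
  ring

def IsOrthonormalFamily [DecidableEq ι] [Fintype m] (v : ι → m → ℂ) : Prop :=
  ∀ i j, star (v i) ⬝ᵥ v j = if i = j then 1 else 0

def givensRotate [DecidableEq ι] (v : ι → m → ℂ) (i j : ι) (a : ℝ) (b : ℂ) : ι → m → ℂ :=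
  Function.update (Function.update v i ((a : ℂ) • v i + b • v j)) j (-star b • v i + (a : ℂ) • v j)

def expectationSum [Fintype ι] [Fintype m] (H : ι → Matrix m m ℂ) (v : ι → m → ℂ) : ℝ :=
  ∑ r, (star (v r) ⬝ᵥ H r *ᵥ v r).re

section givensRotate

variable [DecidableEq ι] {v : ι → m → ℂ} {i j : ι} {a : ℝ} {b : ℂ}

lemma givensRotate_apply_left (hij : i ≠ j) :
    givensRotate v i j a b i = (a : ℂ) • v i + b • v j := by
  simp [givensRotate, hij]

lemma givensRotate_apply_right : givensRotate v i j a b j = -star b • v i + (a : ℂ) • v j := by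
  simp [givensRotate]

lemma givensRotate_apply_of_ne {r : ι} (hri : r ≠ i) (hrj : r ≠ j) :
    givensRotate v i j a b r = v r := by
  simp [givensRotate, hri, hrj]

lemma IsOrthonormalFamily.givensRotate [Fintype m] (hv : IsOrthonormalFamily v) (hij : i ≠ j)
    (hab : a ^ 2 + Complex.normSq b = 1) : IsOrthonormalFamily (givensRotate v i j a b) := by
  have habC : (a : ℂ) ^ 2 + star b * b = 1 := by
    rw [Complex.star_def, ← Complex.normSq_eq_conj_mul_self]
    exact_mod_cast hab
  intro r s
  simp only [_root_.givensRotate, Function.update_apply]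
  split_ifs <;> subst_vars <;>
    simp_all [dotProduct_add, add_dotProduct, dotProduct_smul, smul_dotProduct, hv _ _] <;>
    grind

lemma expectationSum_givensRotate_sub [Fintype ι] [Fintype m] {H : ι → Matrix m m ℂ}
    (hH : ∀ r, (H r).IsHermitian) (v : ι → m → ℂ) (hij : i ≠ j)
    (hab : a ^ 2 + Complex.normSq b = 1) :
    expectationSum H (givensRotate v i j a b) - expectationSum H v =
      Complex.normSq b * ((star (v j) ⬝ᵥ H i *ᵥ v j).re + (star (v i) ⬝ᵥ H j *ᵥ v i).re
        - (star (v i) ⬝ᵥ H i *ᵥ v i).re - (star (v j) ⬝ᵥ H j *ᵥ v j).re)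
      + 2 * a * (b * (star (v i) ⬝ᵥ (H i - H j) *ᵥ v j)).re := by
  rw [expectationSum, expectationSum, ← Finset.sum_sub_distrib,
    Fintype.sum_eq_add i j hij fun r ⟨hri, hrj⟩ => by
      rw [givensRotate_apply_of_ne hri hrj, sub_self],
    givensRotate_apply_left hij, givensRotate_apply_right,
    (hH i).re_star_dotProduct_mulVec_smul_add_smul, (hH j).re_star_dotProduct_mulVec_smul_add_smul]
  simp only [Complex.normSq_ofReal, Complex.normSq_neg, Complex.star_def, Complex.normSq_conj,
    sub_mulVec, dotProduct_sub, Complex.conj_ofReal, map_neg, Complex.conj_conj, Complex.mul_re,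
    Complex.mul_im, Complex.sub_re, Complex.sub_im, Complex.neg_re, Complex.neg_im,
    Complex.ofReal_re, Complex.ofReal_im]
  linear_combination ((star (v i) ⬝ᵥ H i *ᵥ v i).re + (star (v j) ⬝ᵥ H j *ᵥ v j).re) * hab

lemma IsOrthonormalFamily.re_mul_star_dotProduct_sub_mulVec_eq_zero [Fintype ι] [Fintype m]
    {H : ι → Matrix m m ℂ} (hH : ∀ r, (H r).IsHermitian) (hv : IsOrthonormalFamily v)
    (hmax : ∀ w, IsOrthonormalFamily w → expectationSum H w ≤ expectationSum H v)
    (hij : i ≠ j) {z : ℂ} (hz : Complex.normSq z = 1) :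
    (z * (star (v i) ⬝ᵥ (H i - H j) *ᵥ v j)).re = 0 := by
  refine eq_zero_of_forall_sin_sq_mul_add_sin_two_mul_nonpos
    (A := (star (v j) ⬝ᵥ H i *ᵥ v j).re + (star (v i) ⬝ᵥ H j *ᵥ v i).re
      - (star (v i) ⬝ᵥ H i *ᵥ v i).re - (star (v j) ⬝ᵥ H j *ᵥ v j).re) fun t => ?_
  have hab : Real.cos t ^ 2 + Complex.normSq (Real.sin t * z) = 1 := by
    rw [Complex.normSq_mul, Complex.normSq_ofReal, hz, mul_one, ← sq, Real.cos_sq_add_sin_sq]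
  have hvariation := expectationSum_givensRotate_sub hH v hij hab
  rw [Complex.normSq_mul, Complex.normSq_ofReal, hz, mul_assoc (Real.sin t : ℂ),
    Complex.re_ofReal_mul] at hvariation
  rw [Real.sin_two_mul]
  linarith [hmax _ (hv.givensRotate hij hab)]

end givensRotate

/-- Stationarity condition for optimal measurement bases: if the orthonormal
basis `(α₁,…,α_n)` of `ℂⁿ` maximizes `J = Σ_r ⟨α_r, H_r α_r⟩` over all
orthonormal bases, then `⟨α_i, (H_i − H_j) α_j⟩ = 0` for all `i, j`. -/
theorem stmt15 {n : ℕ} (H : Fin n → Matrix (Fin n) (Fin n) ℂ)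
    (hH : ∀ r, (H r).IsHermitian)
    (α : Fin n → (Fin n → ℂ))
    (hortho : ∀ i j, star (α i) ⬝ᵥ α j = if i = j then 1 else 0)
    (hmax : ∀ β : Fin n → (Fin n → ℂ),
      (∀ i j, star (β i) ⬝ᵥ β j = if i = j then 1 else 0) →
      ∑ r, (star (β r) ⬝ᵥ (H r).mulVec (β r)).re
        ≤ ∑ r, (star (α r) ⬝ᵥ (H r).mulVec (α r)).re) :
    ∀ i j, star (α i) ⬝ᵥ ((H i - H j).mulVec (α j)) = 0 := by
  intro i j
  rcases eq_or_ne i j with rfl | hij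
  · simp
  have hre := IsOrthonormalFamily.re_mul_star_dotProduct_sub_mulVec_eq_zero hH hortho hmax hij
    (z := 1) (by simp)
  have him := IsOrthonormalFamily.re_mul_star_dotProduct_sub_mulVec_eq_zero hH hortho hmax hij
    (z := Complex.I) (by simp)
  exact Complex.ext (by simpa using hre) (by simpa using him)
end

section
/- A conditional probability P(r,s|a,b) is local if and only if it lies in the convex hull of the deterministic vertices; that is, P(r,s|a,b) = Σ_x P_A(r|a,x)P_B(s|b,x)P_S(x) for some finite set of x, conditional distributions P_A, P_B and distribution P_S, if and only if there exists a probability distribution ρ_{AB}(𝐫,𝐬) on 𝓡^A×𝓢^B such that P(r,s|a,b) = Σ_{𝐫,𝐬} δ_{r_a,r} δ_{s_b,s} ρ_{AB}(𝐫,𝐬) for all r,s,a,b. -/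
open scoped BigOperators

/-- A conditional probability `P(r,s|a,b)` is local if it is a mixture of
product distributions over a finite hidden variable. -/
def IsLocal {R S : Type*} [Fintype R] [Fintype S] {A B : ℕ}
    (P : R → S → Fin A → Fin B → ℝ) : Prop :=
  ∃ (n : ℕ) (PA : R → Fin A → Fin n → ℝ) (PB : S → Fin B → Fin n → ℝ)
      (PS : Fin n → ℝ),
    (∀ r a x, 0 ≤ PA r a x) ∧ (∀ a x, ∑ r, PA r a x = 1) ∧
    (∀ s b x, 0 ≤ PB s b x) ∧ (∀ b x, ∑ s, PB s b x = 1) ∧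
    IsDist PS ∧
    (∀ r s a b, P r s a b = ∑ x, PA r a x * PB s b x * PS x)

lemma sum_pi_prod {ι : Type*} [Fintype ι] [DecidableEq ι] {α : Type*} [Fintype α]
    (q : ι → α → ℝ) :
    ∑ f : ι → α, ∏ i, q i (f i) = ∏ i, ∑ v, q i v := by
  rw [Finset.prod_univ_sum, Fintype.piFinset_univ]

lemma sum_pi_delta {ι : Type*} [Fintype ι] [DecidableEq ι] {α : Type*} [Fintype α] [DecidableEq α]
    (q : ι → α → ℝ) (h : ∀ i, ∑ v, q i v = 1) (i₀ : ι) (r : α) :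
    ∑ f : ι → α, (if f i₀ = r then (1:ℝ) else 0) * ∏ i, q i (f i) = q i₀ r := by
  have key : ∀ f : ι → α, (if f i₀ = r then (1:ℝ) else 0) * ∏ i, q i (f i)
      = ∏ i, (if i = i₀ then (if f i = r then (1:ℝ) else 0) * q i (f i) else q i (f i)) := by
    intro f
    rw [← Finset.mul_prod_erase Finset.univ
        (fun i => if i = i₀ then (if f i = r then (1:ℝ) else 0) * q i (f i) else q i (f i))
        (Finset.mem_univ i₀),
        ← Finset.mul_prod_erase Finset.univ (fun i => q i (f i)) (Finset.mem_univ i₀)]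
    have e1 : ∏ i ∈ Finset.univ.erase i₀,
        (if i = i₀ then (if f i = r then (1:ℝ) else 0) * q i (f i) else q i (f i))
        = ∏ i ∈ Finset.univ.erase i₀, q i (f i) :=
      Finset.prod_congr rfl (fun i hi => if_neg (Finset.ne_of_mem_erase hi))
    rw [e1, if_pos rfl]
    ring
  rw [Finset.sum_congr rfl (fun f _ => key f)]
  rw [sum_pi_prod (fun i v => if i = i₀ then (if v = r then (1:ℝ) else 0) * q i v else q i v)]
  rw [← Finset.mul_prod_erase Finset.univ _ (Finset.mem_univ i₀)]
  have e2 : ∑ v, (if i₀ = i₀ then (if v = r then (1:ℝ) else 0) * q i₀ v else q i₀ v) = q i₀ r := by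
    simp [Finset.sum_ite_eq']
  have h2 : ∏ i ∈ Finset.univ.erase i₀,
      (∑ v, if i = i₀ then (if v = r then (1:ℝ) else 0) * q i v else q i v) = 1 := by
    apply Finset.prod_eq_one
    intro i hi
    rw [Finset.sum_congr rfl (fun v _ => if_neg (Finset.ne_of_mem_erase hi))]
    exact h i
  rw [e2, h2, mul_one]


/-- A conditional probability is local if and only if it is a convex
combination of the deterministic vertices
`P_A^det(r|𝐫,a) P_B^det(s|𝐬,b) = δ_{r_a,r} δ_{s_b,s}`. -/
theorem stmt16 {R S : Type*} [Fintype R] [Fintype S]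
    [DecidableEq R] [DecidableEq S] {A B : ℕ}
    (P : R → S → Fin A → Fin B → ℝ)
    (hP0 : ∀ r s a b, 0 ≤ P r s a b)
    (hPn : ∀ a b, ∑ r, ∑ s, P r s a b = 1) :
    IsLocal P ↔
      ∃ ρAB : (Fin A → R) × (Fin B → S) → ℝ, IsDist ρAB ∧
        ∀ r s a b, P r s a b =
          ∑ p : (Fin A → R) × (Fin B → S),
            (if p.1 a = r then (1 : ℝ) else 0) *
              (if p.2 b = s then (1 : ℝ) else 0) * ρAB p := by
  constructor
  · rintro ⟨n, PA, PB, PS, hA0, hA1, hB0, hB1, ⟨hS0, hS1⟩, hrep⟩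
    refine ⟨fun p => ∑ x, (∏ a, PA (p.1 a) a x) * (∏ b, PB (p.2 b) b x) * PS x, ⟨?_, ?_⟩, ?_⟩
    · intro p
      apply Finset.sum_nonneg
      intro x _
      exact mul_nonneg (mul_nonneg (Finset.prod_nonneg fun a _ => hA0 _ a x)
        (Finset.prod_nonneg fun b _ => hB0 _ b x)) (hS0 x)
    · rw [Finset.sum_comm]
      rw [Finset.sum_congr rfl (fun x _ => ?_), hS1]
      rw [Fintype.sum_prod_type]
      simp only [← Finset.sum_mul, ← Finset.mul_sum]
      have hF : ∑ f : Fin A → R, ∏ a, PA (f a) a x = 1 := by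
        rw [sum_pi_prod (fun a v => PA v a x)]
        exact Finset.prod_eq_one fun a _ => hA1 a x
      have hG : ∑ g : Fin B → S, ∏ b, PB (g b) b x = 1 := by
        rw [sum_pi_prod (fun b v => PB v b x)]
        exact Finset.prod_eq_one fun b _ => hB1 b x
      rw [hF, hG, one_mul, one_mul]
    · intro r s a b
      rw [hrep r s a b]
      symm
      have key : ∀ x : Fin n,
          (∑ p : (Fin A → R) × (Fin B → S),
            (if p.1 a = r then (1 : ℝ) else 0) * (if p.2 b = s then (1 : ℝ) else 0) *
              ((∏ a', PA (p.1 a') a' x) * (∏ b', PB (p.2 b') b' x) * PS x))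
          = PA r a x * PB s b x * PS x := by
        intro x
        rw [Fintype.sum_prod_type]
        have step : ∀ (f : Fin A → R) (g : Fin B → S),
            (if f a = r then (1 : ℝ) else 0) * (if g b = s then (1 : ℝ) else 0) *
              ((∏ a', PA (f a') a' x) * (∏ b', PB (g b') b' x) * PS x)
            = ((if f a = r then (1 : ℝ) else 0) * ∏ a', PA (f a') a' x) *
              (((if g b = s then (1 : ℝ) else 0) * ∏ b', PB (g b') b' x) * PS x) := by
          intro f g; ring
        simp only [step]
        simp only [← Finset.mul_sum, ← Finset.sum_mul]
        rw [sum_pi_delta (fun a' v => PA v a' x) (fun a' => hA1 a' x) a r,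
            sum_pi_delta (fun b' v => PB v b' x) (fun b' => hB1 b' x) b s]
        ring
      calc ∑ p : (Fin A → R) × (Fin B → S),
            (if p.1 a = r then (1 : ℝ) else 0) * (if p.2 b = s then (1 : ℝ) else 0) *
              ∑ x, (∏ a', PA (p.1 a') a' x) * (∏ b', PB (p.2 b') b' x) * PS x
          = ∑ p : (Fin A → R) × (Fin B → S), ∑ x,
            (if p.1 a = r then (1 : ℝ) else 0) * (if p.2 b = s then (1 : ℝ) else 0) *
              ((∏ a', PA (p.1 a') a' x) * (∏ b', PB (p.2 b') b' x) * PS x) := by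
            simp only [Finset.mul_sum]
        _ = ∑ x, ∑ p : (Fin A → R) × (Fin B → S),
            (if p.1 a = r then (1 : ℝ) else 0) * (if p.2 b = s then (1 : ℝ) else 0) *
              ((∏ a', PA (p.1 a') a' x) * (∏ b', PB (p.2 b') b' x) * PS x) := Finset.sum_comm
        _ = ∑ x, PA r a x * PB s b x * PS x := Finset.sum_congr rfl (fun x _ => key x)
  · rintro ⟨ρ, ⟨hρ0, hρ1⟩, hrep⟩
    set e := (Fintype.equivFin ((Fin A → R) × (Fin B → S))).symm with he
    refine ⟨Fintype.card ((Fin A → R) × (Fin B → S)),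
      fun r a x => if (e x).1 a = r then 1 else 0,
      fun s b x => if (e x).2 b = s then 1 else 0,
      fun x => ρ (e x), ?_, ?_, ?_, ?_, ⟨?_, ?_⟩, ?_⟩
    · intro r a x; positivity
    · intro a x; simp [Finset.sum_ite_eq']
    · intro s b x; positivity
    · intro b x; simp [Finset.sum_ite_eq']
    · intro x; exact hρ0 _
    · exact Equiv.sum_comp e ρ ▸ hρ1
    · intro r s a b
      rw [hrep r s a b, ← Equiv.sum_comp e]
end
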